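/- arXiv:2302.01980 — 3 statements merged into one kernel-verified Lean document; each statement's English description precedes it below -/
import Mathlib

section
/- Let −2 < α < −1 and let n ≥ 1 be an integer. Define φ(z) = sqrt((2+α)·Γ(n−2−α)/(n!·Γ(−1−α))) · zⁿ. Then the kernel K^{α,φ}(z,w) = (1 − φ(z)·conj(φ(w)))/(1 − z·conj(w))^{2+α} on 𝔻 × 𝔻 is positive semidefinite and is a complete Nevanlinna–Pick kernel. -/
/- STATEMENT 3: For −2 < α < −1 and n ≥ 1, with
φ(z) = sqrt((2+α)·Γ(n−2−α)/(n!·Γ(−1−α))) zⁿ, the kernel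
(1 − φ(z)conj(φ(w)))/(1 − z conj(w))^{2+α} is positive semidefinite and is a
complete Nevanlinna–Pick kernel. -/

open Complex
open scoped ComplexConjugate ComplexOrder

noncomputable section

/-- The open unit disk in ℂ. -/
def unitDisk : Set ℂ := Metric.ball 0 1

/-- A positive semidefinite kernel on the unit disk. -/
def IsPSDKernel (K : ℂ → ℂ → ℂ) : Prop :=
  (∀ z ∈ unitDisk, ∀ w ∈ unitDisk, K z w = conj (K w z)) ∧
  ∀ (N : ℕ) (z : Fin N → ℂ), (∀ i, z i ∈ unitDisk) → ∀ c : Fin N → ℂ,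
    0 ≤ ∑ i, ∑ j, K (z i) (z j) * c i * conj (c j)

/-- A complete Nevanlinna–Pick kernel on the unit disk: a positive semidefinite
kernel of the form δ(z) conj(δ(w)) / (1 − ⟨b(z), b(w)⟩) with δ nowhere vanishing.
(Here ⟨b(z), b(w)⟩, linear in the first slot, is `inner (b w) (b z)` in Mathlib's
convention.) -/
def IsCNPKernel (K : ℂ → ℂ → ℂ) : Prop :=
  IsPSDKernel K ∧
  ∃ (L : Type) (_ : NormedAddCommGroup L) (_ : InnerProductSpace ℂ L)
    (b : ℂ → L) (δ : ℂ → ℂ),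
      (∀ z ∈ unitDisk, δ z ≠ 0) ∧
      ∀ z ∈ unitDisk, ∀ w ∈ unitDisk,
        (inner ℂ (b w) (b z) : ℂ) ≠ 1 ∧
        K z w = δ z * conj (δ w) / (1 - (inner ℂ (b w) (b z) : ℂ))

namespace S3

def bin (r : ℝ) : ℕ → ℝ
  | 0 => 1
  | k+1 => bin r k * ((k : ℝ) - r) / (k+1)

variable {r : ℝ}

lemma abs_bin_le (h1 : -1 ≤ r) (h2 : r ≤ 1) : ∀ k, |bin r k| ≤ 1 := by
  intro k
  induction k with
  | zero => simp [bin]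
  | succ k ih =>
    have hk : (0:ℝ) < (k:ℝ) + 1 := by positivity
    have : |bin r (k+1)| = |bin r k| * |(k:ℝ) - r| / ((k:ℝ)+1) := by
      rw [bin, abs_div, abs_mul, abs_of_pos hk]
    rw [this]
    have h3 : |(k:ℝ) - r| ≤ (k:ℝ) + 1 := by
      rw [abs_le]; constructor <;> nlinarith [Nat.cast_nonneg (α := ℝ) k]
    rw [div_le_one hk]
    nlinarith [abs_nonneg (bin r k), abs_nonneg ((k:ℝ) - r)]

lemma norm_bin_le (h1 : -1 ≤ r) (h2 : r ≤ 1) (k : ℕ) : ‖((bin r k : ℝ) : ℂ)‖ ≤ 1 := by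
  rw [Complex.norm_real, Real.norm_eq_abs]; exact abs_bin_le h1 h2 k

lemma summable_bin_mul_pow (h1 : -1 ≤ r) (h2 : r ≤ 1) {y : ℂ} (hy : ‖y‖ < 1) :
    Summable (fun k => (bin r k : ℂ) * y ^ k) := by
  apply Summable.of_norm_bounded (g := fun k => ‖y‖ ^ k)
    (summable_geometric_of_lt_one (norm_nonneg y) hy)
  intro k
  rw [norm_mul, norm_pow]
  calc ‖((bin r k : ℝ) : ℂ)‖ * ‖y‖ ^ k ≤ 1 * ‖y‖ ^ k :=
        mul_le_mul_of_nonneg_right (norm_bin_le h1 h2 k) (by positivity)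
    _ = ‖y‖ ^ k := one_mul _

/-- the sum function -/
def Fb (r : ℝ) (y : ℂ) : ℂ := ∑' k, (bin r k : ℂ) * y ^ k
/-- the termwise derivative -/
def Fb' (r : ℝ) (y : ℂ) : ℂ := ∑' k, (bin r k : ℂ) * ((k : ℂ) * y ^ (k - 1))

lemma hasSum_Fb (h1 : -1 ≤ r) (h2 : r ≤ 1) {y : ℂ} (hy : ‖y‖ < 1) :
    HasSum (fun k => (bin r k : ℂ) * y ^ k) (Fb r y) :=
  (summable_bin_mul_pow h1 h2 hy).hasSum

lemma summable_aux {ρ : ℝ} (h0 : 0 ≤ ρ) (hρ : ρ < 1) :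
    Summable (fun k : ℕ => (k : ℝ) * ρ ^ (k - 1)) := by
  rw [← summable_nat_add_iff 1]
  simp only [Nat.add_sub_cancel]
  have h1 : Summable (fun k : ℕ => (k : ℝ) * ρ ^ k) := by
    simpa using summable_pow_mul_geometric_of_norm_lt_one 1
      (r := ρ) (by rw [Real.norm_eq_abs, _root_.abs_of_nonneg h0]; exact hρ)
  have h2 : Summable (fun k : ℕ => ρ ^ k) := summable_geometric_of_lt_one h0 hρ
  exact (h1.add h2).congr (fun k => by push_cast; ring)

lemma hasSum_Fb' (h1 : -1 ≤ r) (h2 : r ≤ 1) {y : ℂ} (hy : ‖y‖ < 1) :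
    HasSum (fun k => (bin r k : ℂ) * ((k : ℂ) * y ^ (k - 1))) (Fb' r y) := by
  apply Summable.hasSum
  apply Summable.of_norm_bounded (g := fun k : ℕ => (k : ℝ) * ‖y‖ ^ (k - 1))
    (summable_aux (norm_nonneg y) hy)
  intro k
  rw [norm_mul, norm_mul, norm_pow, Complex.norm_natCast]
  calc ‖((bin r k : ℝ) : ℂ)‖ * ((k:ℝ) * ‖y‖ ^ (k-1)) ≤ 1 * ((k:ℝ) * ‖y‖ ^ (k-1)) :=
        mul_le_mul_of_nonneg_right (norm_bin_le h1 h2 k) (by positivity)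
    _ = (k:ℝ) * ‖y‖ ^ (k-1) := one_mul _

lemma hasDerivAt_Fb (h1 : -1 ≤ r) (h2 : r ≤ 1) {y : ℂ} (hy : ‖y‖ < 1) :
    HasDerivAt (Fb r) (Fb' r y) y := by
  set ρ : ℝ := (1 + ‖y‖) / 2 with hρdef
  have hρ0 : 0 ≤ ρ := by positivity
  have hρ1 : ρ < 1 := by simp only [hρdef]; linarith
  have hyρ : ‖y‖ < ρ := by simp only [hρdef]; linarith
  have := hasDerivAt_tsum_of_isPreconnected
    (u := fun k : ℕ => (k : ℝ) * ρ ^ (k - 1))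
    (g := fun k y => (bin r k : ℂ) * y ^ k)
    (g' := fun k y => (bin r k : ℂ) * ((k : ℂ) * y ^ (k - 1)))
    (t := Metric.ball (0 : ℂ) ρ) (y₀ := 0) (y := y)
    (summable_aux hρ0 hρ1) Metric.isOpen_ball (convex_ball (0:ℂ) ρ).isPreconnected
    ?_ ?_ ?_ ?_ ?_
  · exact this
  · intro k z hz
    exact (hasDerivAt_pow k z).const_mul _
  · intro k z hz
    rw [Metric.mem_ball, dist_zero_right] at hz
    rw [norm_mul, norm_mul, norm_pow, Complex.norm_natCast]
    calc ‖((bin r k : ℝ) : ℂ)‖ * ((k:ℝ) * ‖z‖ ^ (k-1))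
        ≤ 1 * ((k:ℝ) * ρ ^ (k-1)) := by
          apply mul_le_mul (norm_bin_le h1 h2 k)
          · exact mul_le_mul_of_nonneg_left
              (pow_le_pow_left₀ (norm_nonneg z) hz.le _) (Nat.cast_nonneg k)
          · positivity
          · exact zero_le_one
      _ = (k:ℝ) * ρ ^ (k-1) := one_mul _
  · exact Metric.mem_ball_self (by positivity)
  · exact summable_bin_mul_pow h1 h2 (by simp)
  · rw [Metric.mem_ball, dist_zero_right]; exact hyρ


lemma ode (h1 : -1 ≤ r) (h2 : r ≤ 1) {y : ℂ} (hy : ‖y‖ < 1) :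
    (1 - y) * Fb' r y + (r : ℂ) * Fb r y = 0 := by
  have hF := hasSum_Fb h1 h2 hy
  have hF' := hasSum_Fb' h1 h2 hy
  have hshift : HasSum (fun k => (bin r (k+1) : ℂ) * (((k:ℂ)+1) * y ^ k)) (Fb' r y) := by
    have h0 : (fun k => (bin r k : ℂ) * ((k : ℂ) * y ^ (k - 1))) 0 = 0 := by simp
    have h := (hasSum_nat_add_iff' (f := fun k => (bin r k : ℂ) * ((k : ℂ) * y ^ (k - 1))) 1
      (g := Fb' r y)).mpr hF'
    simp only [Finset.range_one, Finset.sum_singleton, h0, sub_zero] at h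
    apply h.congr_fun
    intro k
    push_cast
    simp [Nat.add_sub_cancel]
  have hrec : HasSum (fun k => ((bin r k : ℂ) * ((k:ℂ) - r)) * y ^ k) (Fb' r y) := by
    apply hshift.congr_fun
    intro k
    have hb : (bin r (k+1) : ℝ) * ((k:ℝ)+1) = bin r k * ((k:ℝ) - r) := by
      rw [bin]; field_simp
    calc ((bin r k : ℂ) * ((k:ℂ) - r)) * y ^ k
        = ((bin r k * ((k:ℝ) - r) : ℝ) : ℂ) * y ^ k := by push_cast; ring
      _ = ((bin r (k+1) * ((k:ℝ)+1) : ℝ) : ℂ) * y ^ k := by rw [hb]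
      _ = (bin r (k+1) : ℂ) * (((k:ℂ)+1) * y ^ k) := by push_cast; ring
  have hyF' : HasSum (fun k => (bin r k : ℂ) * ((k:ℂ) * y ^ k)) (y * Fb' r y) := by
    apply (hF'.mul_left y).congr_fun
    intro k
    cases k with
    | zero => simp
    | succ k =>
      simp only [Nat.add_sub_cancel]
      push_cast
      ring
  have hrF : HasSum (fun k => (r:ℂ) * ((bin r k : ℂ) * y ^ k)) ((r:ℂ) * Fb r y) :=
    hF.mul_left _
  have hcomb := (hrec.sub hyF').add hrF
  have heq : (fun k => (((bin r k : ℂ) * ((k:ℂ) - r)) * y ^ k -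
      (bin r k : ℂ) * ((k:ℂ) * y ^ k)) + (r:ℂ) * ((bin r k : ℂ) * y ^ k)) =
      fun _ : ℕ => (0:ℂ) := by
    funext k; push_cast; ring
  rw [heq] at hcomb
  have := hcomb.unique hasSum_zero
  linear_combination this

lemma one_sub_ne {y : ℂ} (hy : ‖y‖ < 1) : (1 : ℂ) - y ≠ 0 := by
  intro h
  have : (1:ℂ) = y := by linear_combination h
  rw [← this] at hy
  simp at hy

lemma one_sub_mem_slitPlane {y : ℂ} (hy : ‖y‖ < 1) : (1 : ℂ) - y ∈ slitPlane := by
  left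
  simp only [sub_re, one_re]
  have h := abs_le.mp (Complex.abs_re_le_norm y)
  have : ‖y‖ < 1 := hy
  have : y.re < 1 := lt_of_le_of_lt (le_trans (le_abs_self y.re) (Complex.abs_re_le_norm y)) this
  linarith

lemma Fb_eq (h1 : -1 ≤ r) (h2 : r ≤ 1) {u : ℂ} (hu : ‖u‖ < 1) :
    Fb r u = (1 - u) ^ (r : ℂ) := by
  set G : ℂ → ℂ := fun y => Fb r y * (1 - y) ^ (-(r:ℂ)) with hG
  have hGderiv : ∀ y ∈ Metric.ball (0:ℂ) 1, HasDerivAt G 0 y := by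
    intro y hy
    rw [Metric.mem_ball, dist_zero_right] at hy
    have hd1 : HasDerivAt (fun y : ℂ => (1 - y) ^ (-(r:ℂ)))
        (-(r:ℂ) * (1 - y) ^ (-(r:ℂ) - 1) * (-1)) y :=
      (((hasDerivAt_id y).const_sub 1)).cpow_const (one_sub_mem_slitPlane hy)
    have hd := (hasDerivAt_Fb h1 h2 hy).mul hd1
    refine hd.congr_deriv ?_
    symm
    have hexp : (1 - y) ^ (-(r:ℂ) - 1) = (1 - y) ^ (-(r:ℂ)) * (1 - y)⁻¹ := by
      rw [show (-(r:ℂ) - 1) = (-(r:ℂ)) + (-1) by ring, cpow_add _ _ (one_sub_ne hy),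
        cpow_neg_one]
    rw [hexp]
    have hodey := ode h1 h2 hy
    have h1y : ((1:ℂ) - y) ≠ 0 := one_sub_ne hy
    have hinv : ((1:ℂ) - y) * ((1:ℂ) - y)⁻¹ = 1 := mul_inv_cancel₀ h1y
    linear_combination (-((((1:ℂ)-y)^(-(r:ℂ))) * ((1:ℂ)-y)⁻¹)) * hodey +
      ((((1:ℂ)-y)^(-(r:ℂ))) * Fb' r y) * hinv
  -- G is constant on the ball
  have hball : Convex ℝ (Metric.ball (0:ℂ) 1) := convex_ball 0 1
  have hcon : G u = G 0 := by
    have hmem0 : (0:ℂ) ∈ Metric.ball (0:ℂ) 1 := Metric.mem_ball_self one_pos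
    have hmemu : u ∈ Metric.ball (0:ℂ) 1 := by
      rw [Metric.mem_ball, dist_zero_right]; exact hu
    have hb : ∀ y ∈ Metric.ball (0:ℂ) 1,
        HasFDerivWithinAt G (0 : ℂ →L[ℂ] ℂ) (Metric.ball (0:ℂ) 1) y := by
      intro y hy
      have := (hGderiv y hy).hasFDerivAt.hasFDerivWithinAt (s := Metric.ball (0:ℂ) 1)
      exact this.congr_fderiv (by ext; simp)
    have hbound : ∀ y ∈ Metric.ball (0:ℂ) 1,
        ‖((0 : ℂ →L[ℂ] ℂ).restrictScalars ℝ)‖ ≤ 0 := by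
      intro y hy; simp
    have := hball.norm_image_sub_le_of_norm_hasFDerivWithin_le
      (f' := fun _ => ((0 : ℂ →L[ℂ] ℂ).restrictScalars ℝ))
      (fun y hy => ((hb y hy).restrictScalars ℝ)) (fun y hy => hbound y hy) hmem0 hmemu
    rw [zero_mul] at this
    rw [← sub_eq_zero]
    exact norm_le_zero_iff.mp this
  have hFb0 : Fb r 0 = 1 := by
    rw [Fb]
    rw [tsum_eq_single 0 (by
      intro k hk
      cases k with
      | zero => simp at hk
      | succ m => rw [zero_pow (Nat.succ_ne_zero m), mul_zero])]
    simp [bin]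
  have hG0 : G 0 = 1 := by
    simp only [hG, hFb0]
    simp
  rw [hG0] at hcon
  have hpow_ne : ((1:ℂ) - u) ^ ((r:ℂ)) ≠ 0 := by
    intro hzz
    rw [Complex.cpow_eq_zero_iff] at hzz
    exact one_sub_ne hu hzz.1
  have h2' : Fb r u * (1 - u) ^ (-(r:ℂ)) = 1 := hcon
  rw [Complex.cpow_neg] at h2'
  rwa [mul_inv_eq_one₀ hpow_ne] at h2'


variable {s : ℝ} (hs0 : 0 < s) (hs1 : s < 1)

lemma bin_succ (r : ℝ) (k : ℕ) : bin r (k+1) = bin r k * ((k : ℝ) - r) / (k+1) := rfl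

include hs0 in
lemma c_nonneg : ∀ k, 0 ≤ bin (-s) k := by
  intro k
  induction k with
  | zero => norm_num [bin]
  | succ k ih =>
    rw [bin_succ]
    have : (0:ℝ) ≤ (k:ℝ) - (-s) := by nlinarith [Nat.cast_nonneg (α := ℝ) k]
    positivity

include hs0 hs1 in
lemma c_le_one : ∀ k, bin (-s) k ≤ 1 := by
  intro k
  induction k with
  | zero => norm_num [bin]
  | succ k ih =>
    rw [bin_succ]
    rw [div_le_one (by positivity)]
    have h0 := c_nonneg hs0 k
    have hks : (k:ℝ) - (-s) = (k:ℝ) + s := by ring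
    rw [hks]
    nlinarith [Nat.cast_nonneg (α := ℝ) k]

include hs0 hs1 in
lemma d_nonpos : ∀ k, bin s (k+1) ≤ 0 := by
  intro k
  induction k with
  | zero => rw [bin_succ]; norm_num [bin]; nlinarith
  | succ k ih =>
    rw [bin_succ s (k+1)]
    have hf : (0:ℝ) ≤ (((k+1):ℕ):ℝ) - s := by push_cast; nlinarith [Nat.cast_nonneg (α := ℝ) k]
    have h := mul_nonpos_of_nonpos_of_nonneg ih hf
    apply div_nonpos_of_nonpos_of_nonneg h (by positivity)

include hs0 hs1 in
lemma neg_d_le_c : ∀ k, -bin s (k+1) ≤ bin (-s) (k+1) := by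
  intro k
  induction k with
  | zero => norm_num [bin]
  | succ k ih =>
    have h1 : -bin s (k+1+1) = (-bin s (k+1)) * (((((k+1):ℕ):ℝ) - s)/((((k+1):ℕ):ℝ)+1)) := by
      rw [bin_succ s (k+1)]; ring
    have h2 : bin (-s) (k+1+1) = bin (-s) (k+1) * (((((k+1):ℕ):ℝ) + s)/((((k+1):ℕ):ℝ)+1)) := by
      rw [bin_succ (-s) (k+1)]; ring
    rw [h1, h2]
    have hd : 0 ≤ -bin s (k+1) := by linarith [d_nonpos hs0 hs1 k]
    have hc := c_nonneg hs0 (k+1)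
    have hm : (0:ℝ) < (((k+1):ℕ):ℝ) + 1 := by positivity
    have hf1 : (0:ℝ) ≤ ((((k+1):ℕ):ℝ) - s)/((((k+1):ℕ):ℝ)+1) := by
      apply div_nonneg _ hm.le
      push_cast; nlinarith [Nat.cast_nonneg (α := ℝ) k]
    calc (-bin s (k+1)) * (((((k+1):ℕ):ℝ) - s)/((((k+1):ℕ):ℝ)+1))
        ≤ bin (-s) (k+1) * (((((k+1):ℕ):ℝ) - s)/((((k+1):ℕ):ℝ)+1)) := by
          exact mul_le_mul_of_nonneg_right ih hf1
      _ ≤ bin (-s) (k+1) * (((((k+1):ℕ):ℝ) + s)/((((k+1):ℕ):ℝ)+1)) := by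
          apply mul_le_mul_of_nonneg_left _ hc
          rw [div_le_div_iff_of_pos_right hm]
          nlinarith

include hs0 hs1 in
lemma neg_d_le_s : ∀ k, -bin s (k+1) ≤ s := by
  intro k
  induction k with
  | zero => norm_num [bin]
  | succ k ih =>
    have h1 : -bin s (k+1+1) = (-bin s (k+1)) * (((((k+1):ℕ):ℝ) - s)/((((k+1):ℕ):ℝ)+1)) := by
      rw [bin_succ s (k+1)]; ring
    rw [h1]
    have hd : 0 ≤ -bin s (k+1) := by linarith [d_nonpos hs0 hs1 k]
    have hfle : ((((k+1):ℕ):ℝ) - s)/((((k+1):ℕ):ℝ)+1) ≤ 1 := by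
      rw [div_le_one (by positivity)]
      nlinarith [Nat.cast_nonneg (α := ℝ) (k+1)]
    have hfnn : (0:ℝ) ≤ ((((k+1):ℕ):ℝ) - s)/((((k+1):ℕ):ℝ)+1) := by
      apply div_nonneg _ (by positivity)
      push_cast; nlinarith [Nat.cast_nonneg (α := ℝ) k]
    calc (-bin s (k+1)) * (((((k+1):ℕ):ℝ) - s)/((((k+1):ℕ):ℝ)+1))
        ≤ (-bin s (k+1)) * 1 := mul_le_mul_of_nonneg_left hfle hd
      _ = -bin s (k+1) := mul_one _
      _ ≤ s := ih

include hs0 hs1 in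
lemma c_super (n : ℕ) : ∀ m, bin (-s) n * bin (-s) m ≤ bin (-s) (n + m) := by
  intro m
  induction m with
  | zero => simp [bin]
  | succ m ih =>
    have key : ((m:ℝ) + s) / ((m:ℝ)+1) ≤ ((n:ℝ) + (m:ℝ) + s) / ((n:ℝ)+(m:ℝ)+1) := by
      rw [div_le_div_iff₀ (by positivity) (by positivity)]
      nlinarith [Nat.cast_nonneg (α := ℝ) n, Nat.cast_nonneg (α := ℝ) m]
    have h1 : bin (-s) n * bin (-s) (m+1) =
        (bin (-s) n * bin (-s) m) * (((m:ℝ) + s) / ((m:ℝ)+1)) := by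
      rw [bin_succ (-s) m]; ring
    have h2 : bin (-s) (n + (m+1)) =
        bin (-s) (n + m) * (((n:ℝ) + (m:ℝ) + s) / ((n:ℝ)+(m:ℝ)+1)) := by
      have hee : n + (m+1) = (n + m) + 1 := by omega
      rw [hee, bin_succ (-s) (n+m)]
      push_cast
      ring
    rw [h1, h2]
    have hcc : 0 ≤ bin (-s) n * bin (-s) m := mul_nonneg (c_nonneg hs0 n) (c_nonneg hs0 m)
    calc (bin (-s) n * bin (-s) m) * (((m:ℝ) + s) / ((m:ℝ)+1))
        ≤ (bin (-s) n * bin (-s) m) * (((n:ℝ) + (m:ℝ) + s) / ((n:ℝ)+(m:ℝ)+1)) :=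
          mul_le_mul_of_nonneg_left key hcc
      _ ≤ bin (-s) (n + m) * (((n:ℝ) + (m:ℝ) + s) / ((n:ℝ)+(m:ℝ)+1)) := by
          apply mul_le_mul_of_nonneg_right ih
          positivity

include hs0 hs1 in
lemma d_gamma : ∀ k : ℕ, -bin s (k+1) * (((k+1).factorial : ℝ) * Real.Gamma (1 - s)) =
    s * Real.Gamma (((k:ℝ) + 1) - s) := by
  intro k
  induction k with
  | zero => norm_num [bin]
  | succ k ih =>
    have hfac : (((k+2).factorial : ℕ) : ℝ) = ((k:ℝ)+2) * (((k+1).factorial : ℕ) : ℝ) := by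
      rw [Nat.factorial_succ]; push_cast; ring
    have hb : -bin s (k+1+1) = -bin s (k+1) * (((k:ℝ)+1) - s) / ((k:ℝ)+2) := by
      rw [bin_succ s (k+1)]; push_cast; ring
    have hne : ((k:ℝ) + 1 - s) ≠ 0 := by
      intro h; nlinarith [Nat.cast_nonneg (α := ℝ) k]
    have hΓ : Real.Gamma (((k:ℝ) + 1) + 1 - s) = ((k:ℝ) + 1 - s) * Real.Gamma ((k:ℝ) + 1 - s) := by
      rw [show ((k:ℝ) + 1) + 1 - s = ((k:ℝ) + 1 - s) + 1 by ring, Real.Gamma_add_one hne]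
    have hcast : ((((k+1):ℕ)):ℝ) + 1 - s = ((k:ℝ) + 1) + 1 - s := by push_cast; ring
    rw [show (k+1+1) = (k+2) from rfl] at hb
    rw [hb, hfac, hcast, hΓ]
    have h2 : ((k:ℝ)+2) ≠ 0 := by positivity
    rw [div_mul_eq_mul_div, div_eq_iff h2]
    linear_combination ((k:ℝ)+2) * (((k:ℝ)+1) - s) * ih


variable {n : ℕ} (hn : 1 ≤ n)

/-- the constant t -/
def tc (s : ℝ) (n : ℕ) : ℝ := -bin s n

include hs0 hs1 hn in
lemma tc_nonneg : 0 ≤ tc s n := by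
  obtain ⟨m, rfl⟩ := Nat.exists_eq_add_of_le hn
  have := d_nonpos hs0 hs1 m
  rw [tc]
  have : bin s (1 + m) ≤ 0 := by rwa [add_comm]
  linarith

include hs0 hs1 hn in
lemma tc_lt_one : tc s n < 1 := by
  obtain ⟨m, rfl⟩ := Nat.exists_eq_add_of_le hn
  have := neg_d_le_s hs0 hs1 m
  rw [tc]
  have : -bin s (1 + m) ≤ s := by rwa [add_comm]
  linarith

include hs0 hs1 hn in
lemma tc_le_c : tc s n ≤ bin (-s) n := by
  obtain ⟨m, rfl⟩ := Nat.exists_eq_add_of_le hn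
  have := neg_d_le_c hs0 hs1 m
  rw [tc]
  rwa [add_comm m 1] at this

/-- PSD coefficients -/
def ac (s : ℝ) (n : ℕ) (k : ℕ) : ℝ :=
  bin (-s) k - (if n ≤ k then tc s n * bin (-s) (k-n) else 0)

include hs0 hs1 hn in
lemma ac_nonneg (k : ℕ) : 0 ≤ ac s n k := by
  rw [ac]
  split_ifs with h
  · obtain ⟨m, rfl⟩ := Nat.exists_eq_add_of_le h
    have h1 := c_super hs0 hs1 n m
    have h2 := tc_le_c hs0 hs1 hn
    have h3 := c_nonneg hs0 m
    have h4 : n + m - n = m := by omega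
    rw [h4]
    nlinarith
  · have := c_nonneg hs0 k; linarith

include hs0 hs1 hn in
lemma hasSum_ac {u : ℂ} (hu : ‖u‖ < 1) :
    HasSum (fun k => (ac s n k : ℂ) * u ^ k)
      ((1 - (tc s n : ℂ) * u ^ n) * (1 - u) ^ (-(s:ℂ))) := by
  have hrange : -1 ≤ -s ∧ -s ≤ (1:ℝ) := ⟨by linarith, by linarith⟩
  have hc := hasSum_Fb hrange.1 hrange.2 hu
  have hceq : Fb (-s) u = (1 - u) ^ (-(s:ℂ)) := by
    have := Fb_eq hrange.1 hrange.2 hu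
    rwa [show ((-s : ℝ) : ℂ) = -(s:ℂ) by push_cast; ring] at this
  rw [hceq] at hc
  -- the shifted series
  set f : ℕ → ℂ := fun k => ((if n ≤ k then tc s n * bin (-s) (k-n) else 0 : ℝ) : ℂ) * u ^ k
    with hf
  have hshift : HasSum f ((tc s n : ℂ) * u ^ n * ((1 - u) ^ (-(s:ℂ)))) := by
    have h2 := hc.mul_left ((tc s n : ℂ) * u ^ n)
    have h3 : HasSum (fun k => f (k + n))
        ((tc s n : ℂ) * u ^ n * ((1 - u) ^ (-(s:ℂ))) - ∑ i ∈ Finset.range n, f i) := by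
      have hzero : ∑ i ∈ Finset.range n, f i = 0 := by
        apply Finset.sum_eq_zero
        intro i hi
        rw [Finset.mem_range] at hi
        rw [hf]
        simp only [if_neg (by omega : ¬ n ≤ i)]
        simp
      rw [hzero, sub_zero]
      apply h2.congr_fun
      intro k
      rw [hf]
      simp only [if_pos (by omega : n ≤ k + n)]
      have : k + n - n = k := by omega
      rw [this]
      push_cast
      ring
    exact (hasSum_nat_add_iff' n).mp (by
      rw [show ((tc s n : ℂ) * u ^ n * ((1 - u) ^ (-(s:ℂ))) -
        ∑ i ∈ Finset.range n, f i) = ((tc s n : ℂ) * u ^ n * ((1 - u) ^ (-(s:ℂ))) -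
        ∑ i ∈ Finset.range n, f i) from rfl]
      exact h3)
  have hfinal := hc.sub hshift
  have heq : ∀ k, (ac s n k : ℂ) * u ^ k = (bin (-s) k : ℂ) * u ^ k - f k := by
    intro k
    simp only [ac, hf]
    push_cast
    split_ifs with hcase <;> push_cast <;> ring
  have hres := hfinal.congr_fun heq
  rw [show (1 - (tc s n : ℂ) * u ^ n) * (1 - u) ^ (-(s:ℂ)) =
    (1 - u) ^ (-(s:ℂ)) - (tc s n : ℂ) * u ^ n * (1 - u) ^ (-(s:ℂ)) by ring]
  exact hres


/-- coefficients of (1-u)^s / (1 - t u^n) -/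
def bq (s : ℝ) (n : ℕ) (j : ℕ) : ℝ :=
  ∑ m ∈ Finset.range (j / n + 1), (tc s n)^m * bin s (j - n*m)

lemma bq_zero : bq s n 0 = 1 := by
  rw [bq]
  simp [bin]

lemma bq_lt {j : ℕ} (h : j < n) : bq s n j = bin s j := by
  rw [bq, Nat.div_eq_of_lt h]
  simp

include hn in
lemma bq_rec {j : ℕ} (h : n ≤ j) : bq s n j = bin s j + tc s n * bq s n (j - n) := by
  have hdiv : j / n = (j - n)/n + 1 := Nat.div_eq_sub_div (by omega) h
  rw [bq, hdiv, Finset.sum_range_succ']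
  have h0 : (tc s n)^0 * bin s (j - n*0) = bin s j := by simp
  rw [h0]
  have hsum : ∑ m ∈ Finset.range ((j-n)/n + 1), (tc s n)^(m+1) * bin s (j - n*(m+1)) =
      tc s n * bq s n (j - n) := by
    rw [bq, Finset.mul_sum]
    apply Finset.sum_congr rfl
    intro m _
    have hidx : j - n*(m+1) = (j - n) - n*m := by
      rw [Nat.sub_sub, show n + n*m = n*(m+1) by ring]
    rw [hidx, pow_succ]
    ring
  rw [hsum]
  ring

include hs0 hs1 hn in
lemma bq_nonpos : ∀ j, 1 ≤ j → bq s n j ≤ 0 := by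
  intro j
  induction j using Nat.strong_induction_on with
  | _ j ih =>
    intro hj1
    by_cases hcase : j < n
    · rw [bq_lt hcase]
      obtain ⟨k, rfl⟩ := Nat.exists_eq_add_of_le hj1
      have := d_nonpos hs0 hs1 k
      rwa [add_comm k 1] at this
    · push_neg at hcase
      rw [bq_rec hn hcase]
      by_cases hje : j = n
      · subst hje
        rw [Nat.sub_self, bq_zero, tc, mul_one]
        linarith
      · have hj : 1 ≤ j - n := by omega
        have hlt : j - n < j := by omega
        have hb := ih (j - n) hlt hj
        have ht := tc_nonneg hs0 hs1 hn
        have hd : bin s j ≤ 0 := by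
          obtain ⟨k, rfl⟩ := Nat.exists_eq_add_of_le hj1
          have := d_nonpos hs0 hs1 k
          rwa [add_comm k 1] at this
        nlinarith

include hs0 hs1 hn in
lemma abs_bq_le : ∀ j, |bq s n j| ≤ (1 - tc s n)⁻¹ := by
  intro j
  have ht0 := tc_nonneg hs0 hs1 hn
  have ht1 := tc_lt_one hs0 hs1 hn
  have h1t : (0:ℝ) < 1 - tc s n := by linarith
  calc |bq s n j| ≤ ∑ m ∈ Finset.range (j / n + 1), |(tc s n)^m * bin s (j - n*m)| :=
        Finset.abs_sum_le_sum_abs _ _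
    _ ≤ ∑ m ∈ Finset.range (j / n + 1), (tc s n)^m := by
        apply Finset.sum_le_sum
        intro m _
        rw [abs_mul, _root_.abs_pow, _root_.abs_of_nonneg ht0]
        calc (tc s n)^m * |bin s (j - n*m)| ≤ (tc s n)^m * 1 :=
              mul_le_mul_of_nonneg_left (abs_bin_le (by linarith) (by linarith) _)
                (by positivity)
          _ = (tc s n)^m := mul_one _
    _ ≤ (1 - tc s n)⁻¹ := by
        rw [geom_sum_eq (by intro h; rw [h] at ht1; exact lt_irrefl 1 ht1)]
        rw [div_le_iff_of_neg (by linarith : tc s n - 1 < 0)]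
        have : (0:ℝ) ≤ (tc s n)^(j/n+1) := by positivity
        have hinv : (1 - tc s n)⁻¹ * (tc s n - 1) = -1 := by
          field_simp
          ring
        rw [hinv]
        linarith

include hs0 hs1 hn in
lemma one_sub_tcu_ne {u : ℂ} (hu : ‖u‖ < 1) : (1 : ℂ) - (tc s n : ℂ) * u ^ n ≠ 0 := by
  intro h
  have heq : (tc s n : ℂ) * u ^ n = 1 := by linear_combination -h
  have := congrArg norm heq
  rw [norm_mul, norm_pow, Complex.norm_real, norm_one, Real.norm_eq_abs,
    _root_.abs_of_nonneg (tc_nonneg hs0 hs1 hn)] at this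
  have ht1 := tc_lt_one hs0 hs1 hn
  have ht0 := tc_nonneg hs0 hs1 hn
  have hpow : ‖u‖^n ≤ 1 := pow_le_one₀ (norm_nonneg u) hu.le
  nlinarith

include hs0 hs1 hn in
lemma hasSum_bq {u : ℂ} (hu : ‖u‖ < 1) :
    HasSum (fun j => (bq s n j : ℂ) * u ^ j)
      ((1 - u) ^ (s:ℂ) * (1 - (tc s n : ℂ) * u ^ n)⁻¹) := by
  have ht0 := tc_nonneg hs0 hs1 hn
  have ht1 := tc_lt_one hs0 hs1 hn
  have h1t : (0:ℝ) < 1 - tc s n := by linarith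
  have hsummable : Summable (fun j => (bq s n j : ℂ) * u ^ j) := by
    apply Summable.of_norm_bounded (g := fun j => (1 - tc s n)⁻¹ * ‖u‖ ^ j)
      (Summable.mul_left _ (summable_geometric_of_lt_one (norm_nonneg u) hu))
    intro j
    rw [norm_mul, norm_pow, Complex.norm_real, Real.norm_eq_abs]
    exact mul_le_mul_of_nonneg_right (abs_bq_le hs0 hs1 hn j) (by positivity)
  set P := ∑' j, (bq s n j : ℂ) * u ^ j with hP
  have hPsum : HasSum (fun j => (bq s n j : ℂ) * u ^ j) P := hsummable.hasSum
  set f : ℕ → ℂ := fun j => ((if n ≤ j then tc s n * bq s n (j-n) else 0 : ℝ) : ℂ) * u ^ j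
    with hf
  have hshift : HasSum f ((tc s n : ℂ) * u ^ n * P) := by
    have h2 := hPsum.mul_left ((tc s n : ℂ) * u ^ n)
    apply (hasSum_nat_add_iff' n).mp
    have hzero : ∑ i ∈ Finset.range n, f i = 0 := by
      apply Finset.sum_eq_zero
      intro i hi
      rw [Finset.mem_range] at hi
      simp only [hf, if_neg (by omega : ¬ n ≤ i)]
      simp
    rw [hzero, sub_zero]
    apply h2.congr_fun
    intro k
    simp only [hf, if_pos (by omega : n ≤ k + n)]
    have : k + n - n = k := by omega
    rw [this]
    push_cast
    ring
  have hsub := hPsum.sub hshift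
  have heq : ∀ j, (bin s j : ℂ) * u ^ j = (bq s n j : ℂ) * u ^ j - f j := by
    intro j
    simp only [hf]
    split_ifs with hcase
    · rw [bq_rec hn hcase]
      push_cast
      ring
    · push_neg at hcase
      rw [bq_lt hcase]
      simp
  have hFb := (hsub.congr_fun heq)
  have hFb2 := hasSum_Fb (r := s) (by linarith) (by linarith) hu
  have hPeq : (1 - u) ^ (s:ℂ) = P - (tc s n : ℂ) * u ^ n * P := by
    rw [← Fb_eq (r := s) (by linarith) (by linarith) hu]
    exact hFb2.unique hFb
  have hden := one_sub_tcu_ne hs0 hs1 hn hu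
  have hPval : P = (1 - u) ^ (s:ℂ) * (1 - (tc s n : ℂ) * u ^ n)⁻¹ := by
    rw [hPeq]
    field_simp
  rw [← hPval]
  exact hPsum

/-- CNP coefficients -/
def aG (s : ℝ) (n : ℕ) (j : ℕ) : ℝ := if j = 0 then 0 else -bq s n j

include hs0 hs1 hn in
lemma aG_nonneg : ∀ j, 0 ≤ aG s n j := by
  intro j
  rw [aG]
  split_ifs with h
  · exact le_refl 0
  · have : 1 ≤ j := by omega
    linarith [bq_nonpos hs0 hs1 hn j this]

include hs0 hs1 hn in
lemma aG_le : ∀ j, aG s n j ≤ (1 - tc s n)⁻¹ := by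
  intro j
  rw [aG]
  have h := abs_bq_le hs0 hs1 hn j
  split_ifs with hc
  · have ht1 := tc_lt_one hs0 hs1 hn
    have : (0:ℝ) < 1 - tc s n := by linarith
    positivity
  · calc -bq s n j ≤ |bq s n j| := neg_le_abs _
      _ ≤ (1 - tc s n)⁻¹ := h

include hs0 hs1 hn in
lemma hasSum_aG {u : ℂ} (hu : ‖u‖ < 1) :
    HasSum (fun j => (aG s n j : ℂ) * u ^ j)
      (1 - (1 - u) ^ (s:ℂ) * (1 - (tc s n : ℂ) * u ^ n)⁻¹) := by
  have h1 : HasSum (fun j : ℕ => if j = 0 then (1:ℂ) else 0) 1 := hasSum_ite_eq 0 1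
  have h2 := h1.sub (hasSum_bq hs0 hs1 hn hu)
  apply h2.congr_fun
  intro j
  cases j with
  | zero => simp [aG, bq_zero]
  | succ m => simp only [aG, if_neg (Nat.succ_ne_zero m)]; push_cast; ring


lemma norm_mul_conj_lt {z w : ℂ} (hz : ‖z‖ < 1) (hw : ‖w‖ < 1) : ‖z * conj w‖ < 1 := by
  rw [norm_mul, RCLike.norm_conj]
  nlinarith [norm_nonneg z, norm_nonneg w]

lemma cpow_s_ne {u : ℂ} (hu : ‖u‖ < 1) (s : ℝ) : ((1:ℂ) - u) ^ (s:ℂ) ≠ 0 := by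
  intro h
  rw [Complex.cpow_eq_zero_iff] at h
  exact one_sub_ne hu h.1

lemma conj_cpow_one_sub {u : ℂ} (hu : ‖u‖ < 1) (s : ℝ) :
    conj (((1:ℂ) - u) ^ (s:ℂ)) = (1 - conj u) ^ (s:ℂ) := by
  have harg : ((1:ℂ) - u).arg ≠ Real.pi := by
    intro h
    rw [Complex.arg_eq_pi_iff] at h
    have hre : 0 < ((1:ℂ) - u).re := by
      have := one_sub_mem_slitPlane hu
      rcases this with h' | h'
      · exact h'
      · exact absurd h.2 h'
    linarith [h.1]
  have := Complex.conj_cpow (1 - u) (s:ℂ) harg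
  rw [Complex.conj_ofReal] at this
  rw [← this, map_sub, map_one]

end S3

open S3

theorem stmt3 (α : ℝ) (hα₁ : -2 < α) (hα₂ : α < -1) (n : ℕ) (hn : 1 ≤ n) :
    IsPSDKernel (fun z w =>
        (1 - ((Real.sqrt ((2 + α) * Real.Gamma ((n : ℝ) - 2 - α) /
              ((n.factorial : ℝ) * Real.Gamma (-1 - α))) : ℂ) * z ^ n) *
            conj ((Real.sqrt ((2 + α) * Real.Gamma ((n : ℝ) - 2 - α) /
              ((n.factorial : ℝ) * Real.Gamma (-1 - α))) : ℂ) * w ^ n)) /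
          (1 - z * conj w) ^ (((2 : ℝ) + α : ℝ) : ℂ)) ∧
    IsCNPKernel (fun z w =>
        (1 - ((Real.sqrt ((2 + α) * Real.Gamma ((n : ℝ) - 2 - α) /
              ((n.factorial : ℝ) * Real.Gamma (-1 - α))) : ℂ) * z ^ n) *
            conj ((Real.sqrt ((2 + α) * Real.Gamma ((n : ℝ) - 2 - α) /
              ((n.factorial : ℝ) * Real.Gamma (-1 - α))) : ℂ) * w ^ n)) /
          (1 - z * conj w) ^ (((2 : ℝ) + α : ℝ) : ℂ)) := by
  set s : ℝ := 2 + α with hs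
  have hs0 : 0 < s := by rw [hs]; linarith
  have hs1 : s < 1 := by rw [hs]; linarith
  set X : ℝ := (2 + α) * Real.Gamma ((n : ℝ) - 2 - α) /
      ((n.factorial : ℝ) * Real.Gamma (-1 - α)) with hX
  -- X equals tc s n
  have hXt : X = tc s n := by
    obtain ⟨m, rfl⟩ : ∃ m, n = m + 1 := ⟨n - 1, by omega⟩
    have hg := d_gamma hs0 hs1 m
    have hfg : (0:ℝ) < ((m+1).factorial : ℝ) * Real.Gamma (1 - s) := by
      have h1 : (0:ℝ) < Real.Gamma (1 - s) := Real.Gamma_pos_of_pos (by linarith)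
      have h2 : (0:ℝ) < ((m+1).factorial : ℝ) := by positivity
      positivity
    have hcast1 : ((m+1 : ℕ) : ℝ) - 2 - α = ((m:ℝ) + 1) - s := by push_cast; rw [hs]; ring
    have hcast2 : (-1 : ℝ) - α = 1 - s := by rw [hs]; ring
    rw [hX, hcast1, hcast2, tc]
    rw [div_eq_iff (ne_of_gt hfg)]
    have hsalpha : (2:ℝ) + α = s := by rw [hs]
    rw [hsalpha]
    linear_combination -hg
  have hX0 : 0 ≤ X := hXt ▸ tc_nonneg hs0 hs1 hn
  have hsqX : (Real.sqrt X : ℂ) * (Real.sqrt X : ℂ) = (tc s n : ℂ) := by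
    rw [← Complex.ofReal_mul, Real.mul_self_sqrt hX0, hXt]
  -- canonical form of the kernel
  set K : ℂ → ℂ → ℂ := fun z w =>
      (1 - ((Real.sqrt X : ℂ) * z ^ n) * conj ((Real.sqrt X : ℂ) * w ^ n)) /
        (1 - z * conj w) ^ (((2 : ℝ) + α : ℝ) : ℂ) with hK
  have hsexp : (((2 : ℝ) + α : ℝ) : ℂ) = ((s : ℝ) : ℂ) := by rw [hs]
  have hKeq : ∀ z w : ℂ, K z w =
      (1 - (tc s n : ℂ) * (z * conj w) ^ n) / (1 - z * conj w) ^ ((s : ℝ) : ℂ) := by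
    intro z w
    rw [hK]
    simp only [hsexp]
    congr 1
    rw [map_mul, Complex.conj_ofReal, map_pow, mul_pow]
    rw [← hsqX]
    ring
  -- Hermitian symmetry
  have hherm : ∀ z ∈ unitDisk, ∀ w ∈ unitDisk, K z w = conj (K w z) := by
    intro z hz w hw
    rw [unitDisk, Metric.mem_ball, dist_zero_right] at hz hw
    have hv : ‖w * conj z‖ < 1 := norm_mul_conj_lt hw hz
    have hu : ‖z * conj w‖ < 1 := norm_mul_conj_lt hz hw
    have mc : conj (w * conj z) = z * conj w := by
      rw [map_mul, Complex.conj_conj]; ring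
    rw [hKeq z w, hKeq w z, map_div₀, map_sub, map_one, map_mul, map_pow,
      Complex.conj_ofReal, conj_cpow_one_sub hv s, mc]
  have hPSD : IsPSDKernel K := by
    constructor
    · exact hherm
    · intro N z hz c
      -- positivity
      have hzn : ∀ i, ‖z i‖ < 1 := by
        intro i
        have := hz i
        rwa [unitDisk, Metric.mem_ball, dist_zero_right] at this
      have hterm : ∀ i j : Fin N, HasSum
          (fun k => ((ac s n k : ℂ) * (z i * conj (z j)) ^ k) * (c i * conj (c j)))
          (K (z i) (z j) * c i * conj (c j)) := by
        intro i j
        have hu : ‖z i * conj (z j)‖ < 1 := norm_mul_conj_lt (hzn i) (hzn j)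
        have h := (hasSum_ac hs0 hs1 hn hu).mul_right (c i * conj (c j))
        have hKval : K (z i) (z j) * c i * conj (c j) =
            ((1 - (tc s n : ℂ) * (z i * conj (z j)) ^ n) *
              (1 - z i * conj (z j)) ^ (-(s:ℂ))) * (c i * conj (c j)) := by
          rw [hKeq]
          rw [Complex.cpow_neg]
          ring
        rw [hKval]
        exact h
      have htot : HasSum
          (fun k => ∑ i : Fin N, ∑ j : Fin N,
            ((ac s n k : ℂ) * (z i * conj (z j)) ^ k) * (c i * conj (c j)))
          (∑ i : Fin N, ∑ j : Fin N, K (z i) (z j) * c i * conj (c j)) := by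
        apply hasSum_sum
        intro i _
        apply hasSum_sum
        intro j _
        exact hterm i j
      apply hasSum_le (f := fun _ : ℕ => (0:ℂ)) _ hasSum_zero htot
      intro k
      show (0:ℂ) ≤ ∑ i : Fin N, ∑ j : Fin N,
        ((ac s n k : ℂ) * (z i * conj (z j)) ^ k) * (c i * conj (c j))
      have hrw : ∑ i : Fin N, ∑ j : Fin N,
          ((ac s n k : ℂ) * (z i * conj (z j)) ^ k) * (c i * conj (c j)) =
          ((ac s n k * Complex.normSq (∑ i : Fin N, z i ^ k * c i) : ℝ) : ℂ) := by
        have h1 : ∀ i j : Fin N,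
            ((ac s n k : ℂ) * (z i * conj (z j)) ^ k) * (c i * conj (c j)) =
            (ac s n k : ℂ) * ((z i ^ k * c i) * conj (z j ^ k * c j)) := by
          intro i j
          rw [mul_pow, map_mul, map_pow]
          ring
        calc ∑ i : Fin N, ∑ j : Fin N,
              ((ac s n k : ℂ) * (z i * conj (z j)) ^ k) * (c i * conj (c j))
            = ∑ i : Fin N, ∑ j : Fin N,
              (ac s n k : ℂ) * ((z i ^ k * c i) * conj (z j ^ k * c j)) := by
              apply Finset.sum_congr rfl; intro i _
              exact Finset.sum_congr rfl (fun j _ => h1 i j)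
          _ = (ac s n k : ℂ) * ((∑ i : Fin N, z i ^ k * c i) *
                conj (∑ j : Fin N, z j ^ k * c j)) := by
              rw [map_sum, Finset.sum_mul_sum]
              simp only [Finset.mul_sum]
          _ = ((ac s n k * Complex.normSq (∑ i : Fin N, z i ^ k * c i) : ℝ) : ℂ) := by
              rw [mul_conj]
              push_cast
              ring
      rw [hrw]
      have : (0:ℝ) ≤ ac s n k * Complex.normSq (∑ i : Fin N, z i ^ k * c i) := by
        apply mul_nonneg (ac_nonneg hs0 hs1 hn k) (Complex.normSq_nonneg _)
      exact_mod_cast this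
  refine ⟨hPSD, hPSD, ?_⟩
  -- CNP structure
  have hCb0 : (0:ℝ) < 1 - tc s n := by linarith [tc_lt_one hs0 hs1 hn]
  set ψ : ℂ → ℕ → ℂ := fun z j => ((Real.sqrt (aG s n j) : ℝ) : ℂ) * z ^ j with hψ
  have hmem : ∀ z : ℂ, ‖z‖ < 1 → Memℓp (ψ z) 2 := by
    intro z hz
    apply memℓp_gen
    have h2 : ((2:ENNReal)).toReal = (2:ℝ) := by norm_num
    rw [h2]
    have heq : ∀ j, ‖ψ z j‖ ^ (2:ℝ) = aG s n j * (‖z‖^2) ^ j := by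
      intro j
      have hnn : 0 ≤ aG s n j := aG_nonneg hs0 hs1 hn j
      rw [show (2:ℝ) = ((2:ℕ):ℝ) by norm_num, Real.rpow_natCast]
      rw [hψ]
      simp only [norm_mul, norm_pow, Complex.norm_real, Real.norm_eq_abs,
        _root_.abs_of_nonneg (Real.sqrt_nonneg _)]
      rw [mul_pow, Real.sq_sqrt hnn, ← pow_mul, ← pow_mul, Nat.mul_comm 2 j]
    have hz2 : ‖z‖^2 < 1 := by nlinarith [norm_nonneg z]
    have hz2nn : (0:ℝ) ≤ ‖z‖^2 := by positivity
    apply Summable.of_nonneg_of_le (fun j => by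
        rw [heq j]
        exact mul_nonneg (aG_nonneg hs0 hs1 hn j) (by positivity))
      (fun j => ?_) (Summable.mul_left ((1 - tc s n)⁻¹)
        (summable_geometric_of_lt_one hz2nn hz2))
    rw [heq j]
    exact mul_le_mul_of_nonneg_right (aG_le hs0 hs1 hn j) (by positivity)
  set bb : ℂ → lp (fun _ : ℕ => ℂ) 2 := fun z =>
    if h : ‖z‖ < 1 then (⟨ψ z, hmem z h⟩ : lp (fun _ : ℕ => ℂ) 2) else 0 with hbb
  refine ⟨lp (fun _ : ℕ => ℂ) 2, inferInstance, inferInstance, bb, fun _ => 1,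
    fun z _ => one_ne_zero, ?_⟩
  intro z hz w hw
  rw [unitDisk, Metric.mem_ball, dist_zero_right] at hz hw
  have hu : ‖z * conj w‖ < 1 := norm_mul_conj_lt hz hw
  set u : ℂ := z * conj w with hudef
  have hinner : (inner ℂ (bb w) (bb z) : ℂ) =
      1 - (1 - u) ^ ((s:ℝ):ℂ) * (1 - (tc s n : ℂ) * u ^ n)⁻¹ := by
    rw [hbb]
    simp only [dif_pos hz, dif_pos hw]
    have h1 : (inner ℂ (⟨ψ w, hmem w hw⟩ : lp (fun _ : ℕ => ℂ) 2)
        (⟨ψ z, hmem z hz⟩ : lp (fun _ : ℕ => ℂ) 2) : ℂ) =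
        ∑' j, conj (ψ w j) * ψ z j := by
      rw [lp.inner_eq_tsum]
      simp only [RCLike.inner_apply']
    rw [h1]
    have h3 : HasSum (fun j => conj (ψ w j) * ψ z j)
        (1 - (1 - u) ^ ((s:ℝ):ℂ) * (1 - (tc s n : ℂ) * u ^ n)⁻¹) := by
      apply (hasSum_aG hs0 hs1 hn hu).congr_fun
      intro j
      have hnn : 0 ≤ aG s n j := aG_nonneg hs0 hs1 hn j
      rw [hψ]
      simp only [map_mul, Complex.conj_ofReal, map_pow]
      rw [hudef, mul_pow]
      rw [show ((Real.sqrt (aG s n j) : ℝ) : ℂ) * ((conj w) ^ j) *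
        (((Real.sqrt (aG s n j) : ℝ) : ℂ) * z ^ j) =
        (((Real.sqrt (aG s n j) : ℝ) : ℂ) * ((Real.sqrt (aG s n j) : ℝ) : ℂ)) *
          (z ^ j * (conj w) ^ j) by ring]
      rw [← Complex.ofReal_mul, Real.mul_self_sqrt hnn]
    exact h3.tsum_eq
  have hfac : (1 - u) ^ ((s:ℝ):ℂ) * (1 - (tc s n : ℂ) * u ^ n)⁻¹ ≠ 0 :=
    mul_ne_zero (cpow_s_ne hu s) (inv_ne_zero (one_sub_tcu_ne hs0 hs1 hn hu))
  constructor
  · rw [hinner]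
    intro hcon
    apply hfac
    linear_combination -hcon
  · rw [hinner, hKeq]
    have hden := one_sub_tcu_ne hs0 hs1 hn hu
    have hcp := cpow_s_ne hu s
    rw [show (1:ℂ) - (1 - (1 - u) ^ ((s:ℝ):ℂ) * (1 - (tc s n : ℂ) * u ^ n)⁻¹) =
      (1 - u) ^ ((s:ℝ):ℂ) * (1 - (tc s n : ℂ) * u ^ n)⁻¹ by ring]
    rw [map_one, mul_one, ← hudef]
    field_simp

end
end

section
/- Let α > −1 and let φ be an analytic function on 𝔻 with |φ(z)| ≤ 1 for all z ∈ 𝔻. Then H^α(φ) ∩ φ·A²_α = φ·H^α(conj φ), where φ·S = {φ·f : f ∈ S} for a set S of functions on 𝔻. -/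
/- STATEMENT 6: For α > −1 and φ ∈ H^∞_1, with T = T_φ on A²_α,
D = D_φ = (I − T T*)^{1/2} and D' = D_{conj φ} = (I − T* T)^{1/2}, one has
H^α(φ) ∩ φ·A²_α = φ·H^α(conj φ), as subsets of A²_α. -/

open Complex MeasureTheory
open scoped ENNReal ComplexConjugate

noncomputable section
set_option synthInstance.maxHeartbeats 1000000
set_option maxHeartbeats 1000000

/-- The measure dA_β = (β+1)(1 − |z|²)^β dA(z) on the unit disk, where dA is
Lebesgue area measure normalized so that the disk has measure 1. -/
def mA (β : ℝ) : Measure ℂ :=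
  (MeasureTheory.volume.restrict unitDisk).withDensity
    fun z => ENNReal.ofReal ((β + 1) * (1 - ‖z‖ ^ 2) ^ β / Real.pi)

/-- The submodule of L²(𝔻, dA_β) of elements having an analytic representative. -/
def analyticSubmodule (β : ℝ) : Submodule ℂ (Lp ℂ 2 (mA β)) where
  carrier := {f | ∃ g : ℂ → ℂ, DifferentiableOn ℂ g unitDisk ∧ (⇑f : ℂ → ℂ) =ᵐ[mA β] g}
  zero_mem' := ⟨0, differentiableOn_const 0, by
    filter_upwards [Lp.coeFn_zero ℂ 2 (mA β)] with z hz using by simpa using hz⟩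
  add_mem' := by
    rintro f₁ f₂ ⟨g₁, hg₁, he₁⟩ ⟨g₂, hg₂, he₂⟩
    exact ⟨g₁ + g₂, hg₁.add hg₂, by
      filter_upwards [Lp.coeFn_add f₁ f₂, he₁, he₂] with z h1 h2 h3
      simp only [h1, Pi.add_apply, h2, h3]⟩
  smul_mem' := by
    rintro c f ⟨g, hg, he⟩
    exact ⟨c • g, hg.const_smul c, by
      filter_upwards [Lp.coeFn_smul c f, he] with z h1 h2
      simp only [h1, Pi.smul_apply, h2]⟩

/-- The weighted Bergman space A²_β, β > −1, as a closed subspace of L²(𝔻, dA_β):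
since the set of elements with an analytic representative is closed in L², it
coincides with its topological closure. -/
def A2 (β : ℝ) : Submodule ℂ (Lp ℂ 2 (mA β)) :=
  (analyticSubmodule β).topologicalClosure

instance (β : ℝ) : CompleteSpace (A2 β) :=
  (Submodule.isClosed_topologicalClosure (analyticSubmodule β)).isComplete.completeSpace_coe

/-- A finite Blaschke product: z ↦ ζ ∏_{k=1}^n (a_k − z)/(1 − conj(a_k) z) with
|ζ| = 1, n ≥ 0 and a_k ∈ 𝔻. -/
def IsFiniteBlaschke (φ : ℂ → ℂ) : Prop :=
  ∃ (n : ℕ) (ζ : ℂ) (a : Fin n → ℂ), ‖ζ‖ = 1 ∧ (∀ k, a k ∈ unitDisk) ∧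
    ∀ z ∈ unitDisk, φ z = ζ * ∏ k, (a k - z) / (1 - conj (a k) * z)


open Polynomial in
lemma aux_aeval {A : Type*} [CStarAlgebra A] (T c d : A)
    (h : T * c = d * T) (p : ℝ[X]) :
    T * Polynomial.aeval c p = Polynomial.aeval d p * T := by
  have hpow : ∀ n : ℕ, T * c ^ n = d ^ n * T := by
    intro n
    induction n with
    | zero => simp
    | succ n ih =>
      rw [pow_succ, ← mul_assoc, ih, mul_assoc, h, ← mul_assoc, ← pow_succ]
  induction p using Polynomial.induction_on' with
  | add p q hp hq => simp [mul_add, add_mul, hp, hq]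
  | monomial n a =>
    simp only [aeval_monomial, Algebra.algebraMap_eq_smul_one]
    rw [smul_mul_assoc, one_mul, mul_smul_comm, hpow n, smul_mul_assoc, smul_mul_assoc, one_mul]

lemma intertwine_sqrt {A : Type*} [CStarAlgebra A] (T c d : A)
    (hc : IsSelfAdjoint c) (hd : IsSelfAdjoint d)
    (h : T * c = d * T) : T * cfc Real.sqrt c = cfc Real.sqrt d * T := by
  nontriviality A
  set M := max ‖c‖ ‖d‖ with hM
  set S : Set ℝ := Set.Icc (-M) M with hS
  have hcs : spectrum ℝ c ⊆ S := by
    intro x hx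
    have h1 : ‖x‖ ≤ ‖c‖ := spectrum.norm_le_norm_of_mem hx
    have := abs_le.mp (le_trans h1 (le_max_left _ _) : |x| ≤ M)
    exact ⟨this.1, this.2⟩
  have hds : spectrum ℝ d ⊆ S := by
    intro x hx
    have h1 : ‖x‖ ≤ ‖d‖ := spectrum.norm_le_norm_of_mem hx
    have := abs_le.mp (le_trans h1 (le_max_right _ _) : |x| ≤ M)
    exact ⟨this.1, this.2⟩
  have : CompactSpace S := isCompact_iff_compactSpace.mp isCompact_Icc
  set F : C(S, ℝ) := ⟨fun x => Real.sqrt x, Real.continuous_sqrt.comp continuous_subtype_val⟩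
    with hF
  have hFmem : F ∈ closure ((polynomialFunctions S : Subalgebra ℝ C(S, ℝ)) : Set C(S, ℝ)) := by
    rw [← Subalgebra.topologicalClosure_coe, polynomialFunctions.topologicalClosure S]
    trivial
  obtain ⟨g, hgmem, hconv⟩ := mem_closure_iff_seq_limit.mp hFmem
  have hp : ∀ n, ∃ q : Polynomial ℝ, q.toContinuousMapOn S = g n := by
    intro n
    have := hgmem n
    rw [SetLike.mem_coe, polynomialFunctions] at this
    obtain ⟨q, -, hq⟩ := this
    exact ⟨q, hq⟩
  choose p hpe using hp
  have key : ∀ (a : A) (ha : IsSelfAdjoint a), spectrum ℝ a ⊆ S →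
      Filter.Tendsto (fun n => Polynomial.aeval a (p n)) Filter.atTop (nhds (cfc Real.sqrt a)) := by
    intro a ha has
    rw [tendsto_iff_norm_sub_tendsto_zero]
    have hb : ∀ n, ‖Polynomial.aeval a (p n) - cfc Real.sqrt a‖ ≤ ‖g n - F‖ := by
      intro n
      rw [← cfc_polynomial (p n) a ha, ← cfc_sub _ _ a]
      refine norm_cfc_le (norm_nonneg _) fun x hx => ?_
      have hxS : x ∈ S := has hx
      have : (g n - F) ⟨x, hxS⟩ = (p n).eval x - Real.sqrt x := by
        rw [ContinuousMap.sub_apply, ← hpe n]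
        rfl
      rw [← this]
      exact ContinuousMap.norm_coe_le_norm _ _
    refine squeeze_zero (fun n => norm_nonneg _) hb ?_
    rw [← tendsto_iff_norm_sub_tendsto_zero] at *
    exact hconv
  have ha := key c hc hcs
  have hb := key d hd hds
  have heq : ∀ n, T * Polynomial.aeval c (p n) = Polynomial.aeval d (p n) * T :=
    fun n => aux_aeval T c d h (p n)
  have h1 : Filter.Tendsto (fun n => T * Polynomial.aeval c (p n)) Filter.atTop
      (nhds (T * cfc Real.sqrt c)) := Filter.Tendsto.const_mul T ha
  have h2 : Filter.Tendsto (fun n => T * Polynomial.aeval c (p n)) Filter.atTop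
      (nhds (cfc Real.sqrt d * T)) := by
    simp_rw [heq]
    exact Filter.Tendsto.mul_const T hb
  exact tendsto_nhds_unique h1 h2

lemma sqrt_char {A : Type*} [CStarAlgebra A] [PartialOrder A] [StarOrderedRing A]
    (b c : A) (hb : 0 ≤ b) (hc0 : 0 ≤ c) (h : b * b = c) : b = cfc Real.sqrt c := by
  have h1 : CFC.sqrt c = b := CFC.sqrt_unique h hb
  have hnn : 0 ≤ cfc Real.sqrt c :=
    cfc_nonneg fun x _ => Real.sqrt_nonneg x
  have hprod : cfc Real.sqrt c * cfc Real.sqrt c = c := by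
    rw [← cfc_mul Real.sqrt Real.sqrt c]
    have : cfc (fun x => Real.sqrt x * Real.sqrt x) c = cfc (id : ℝ → ℝ) c :=
      cfc_congr fun x hx => Real.mul_self_sqrt (spectrum_nonneg_of_nonneg hc0 hx)
    rw [this, cfc_id ℝ c]
  have h2 : CFC.sqrt c = cfc Real.sqrt c := CFC.sqrt_unique hprod hnn
  rw [← h1, h2]


lemma DT_eq {E : Type*} [NormedAddCommGroup E] [InnerProductSpace ℂ E] [CompleteSpace E]
    (T D D' : E →L[ℂ] E) (hD : D.IsPositive) (hD' : D'.IsPositive)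
    (hDsq : D * D = 1 - T * star T) (hD'sq : D' * D' = 1 - star T * T) :
    T * D' = D * T ∧ star T * D = D' * star T := by
  have hD0 : 0 ≤ D := (ContinuousLinearMap.nonneg_iff_isPositive D).mpr hD
  have hD'0 : 0 ≤ D' := (ContinuousLinearMap.nonneg_iff_isPositive D').mpr hD'
  have hd0 : 0 ≤ 1 - T * star T := by
    rw [← hDsq]
    calc (0:E →L[ℂ] E) ≤ star D * D := star_mul_self_nonneg D
    _ = D * D := by rw [hD.isSelfAdjoint.star_eq]
  have hc0 : 0 ≤ 1 - star T * T := by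
    rw [← hD'sq]
    calc (0:E →L[ℂ] E) ≤ star D' * D' := star_mul_self_nonneg D'
    _ = D' * D' := by rw [hD'.isSelfAdjoint.star_eq]
  have hdsa : IsSelfAdjoint (1 - T * star T) := by
    rw [IsSelfAdjoint, star_sub, star_one, star_mul, star_star]
  have hcsa : IsSelfAdjoint (1 - star T * T) := by
    rw [IsSelfAdjoint, star_sub, star_one, star_mul, star_star]
  have hDc : D = cfc Real.sqrt (1 - T * star T) := sqrt_char D _ hD0 hd0 hDsq
  have hD'c : D' = cfc Real.sqrt (1 - star T * T) := sqrt_char D' _ hD'0 hc0 hD'sq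
  have hint : T * (1 - star T * T) = (1 - T * star T) * T := by noncomm_ring
  have h1 : T * D' = D * T := by
    rw [hDc, hD'c]
    exact intertwine_sqrt T _ _ hcsa hdsa hint
  refine ⟨h1, ?_⟩
  have := congrArg star h1
  rw [star_mul, star_mul, hD.isSelfAdjoint.star_eq, hD'.isSelfAdjoint.star_eq] at this
  exact this.symm

theorem stmt6 (α : ℝ) (hα : -1 < α)
    (φ : ℂ → ℂ) (hφd : DifferentiableOn ℂ φ unitDisk)
    (hφ1 : ∀ z ∈ unitDisk, ‖φ z‖ ≤ 1)
    (T : A2 α →L[ℂ] A2 α)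
    (hT : ∀ f : A2 α, (↑(↑(T f) : Lp ℂ 2 (mA α)) : ℂ → ℂ) =ᵐ[mA α]
      fun z => φ z * (↑(↑f : Lp ℂ 2 (mA α)) : ℂ → ℂ) z)
    (D : A2 α →L[ℂ] A2 α) (hDpos : D.IsPositive)
    (hDsq : D.comp D =
      ContinuousLinearMap.id ℂ (A2 α) - T.comp (ContinuousLinearMap.adjoint T))
    (D' : A2 α →L[ℂ] A2 α) (hD'pos : D'.IsPositive)
    (hD'sq : D'.comp D' =
      ContinuousLinearMap.id ℂ (A2 α) - (ContinuousLinearMap.adjoint T).comp T) :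
    {f : A2 α | f ∈ Set.range D ∧ ∃ g : A2 α,
        (↑(↑f : Lp ℂ 2 (mA α)) : ℂ → ℂ) =ᵐ[mA α]
          fun z => φ z * (↑(↑g : Lp ℂ 2 (mA α)) : ℂ → ℂ) z} =
      {f : A2 α | ∃ h ∈ Set.range D',
        (↑(↑f : Lp ℂ 2 (mA α)) : ℂ → ℂ) =ᵐ[mA α]
          fun z => φ z * (↑(↑h : Lp ℂ 2 (mA α)) : ℂ → ℂ) z} := by
  -- Reduce operator hypotheses to algebra form
  have hadj : ContinuousLinearMap.adjoint T = star T :=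
    (ContinuousLinearMap.star_eq_adjoint T).symm
  have hDsq' : D * D = 1 - T * star T := by
    have := hDsq
    rw [hadj] at this
    exact this
  have hD'sq' : D' * D' = 1 - star T * T := by
    have := hD'sq
    rw [hadj] at this
    exact this
  obtain ⟨h1, h2⟩ := DT_eq T D D' hDpos hD'pos hDsq' hD'sq'
  -- h1 : T * D' = D * T, h2 : star T * D = D' * star T
  have hTeq : ∀ (f g : A2 α),
      ((↑(↑f : Lp ℂ 2 (mA α)) : ℂ → ℂ) =ᵐ[mA α]
        fun z => φ z * (↑(↑g : Lp ℂ 2 (mA α)) : ℂ → ℂ) z) → f = T g := by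
    intro f g hfg
    apply Subtype.ext
    exact (MeasureTheory.Lp.ext (hfg.trans (hT g).symm) : (↑f : Lp ℂ 2 (mA α)) = ↑(T g))
  ext f
  simp only [Set.mem_setOf_eq]
  constructor
  · rintro ⟨⟨u, hu⟩, g, hg⟩
    have hfg : f = T g := hTeq f g hg
    refine ⟨g, ⟨D' g + star T u, ?_⟩, hg⟩
    have e1 : D' (D' g) = g - star T (T g) := by
      have : (D' * D') g = (1 - star T * T) g := by rw [hD'sq']
      simpa [ContinuousLinearMap.mul_apply, ContinuousLinearMap.sub_apply,
        ContinuousLinearMap.one_apply] using this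
    have e2 : D' (star T u) = star T (T g) := by
      have : (D' * star T) u = (star T * D) u := h2.symm ▸ rfl
      simp only [ContinuousLinearMap.mul_apply] at this
      rw [this, hu, hfg]
    rw [map_add, e1, e2]
    abel
  · rintro ⟨h, ⟨x, hx⟩, hf⟩
    have hfh : f = T h := hTeq f h hf
    refine ⟨⟨T x, ?_⟩, h, hf⟩
    have : (D * T) x = (T * D') x := by rw [h1]
    simp only [ContinuousLinearMap.mul_apply] at this
    rw [this, hx, ← hfh]

end
end

section
/- Let φ be a non-constant analytic function on 𝔻 with |φ(z)| ≤ 1 for all z ∈ 𝔻. Then the following are equivalent: (a) φ is a finite Blaschke product; (b) 1 − |φ(z)|² → 0 as |z| → 1⁻; (c) there exist constants 0 < c ≤ C such that c ≤ (1 − |φ(z)|²)/(1 − |z|²) ≤ C for all z ∈ 𝔻. -/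
/- STATEMENT 8: For a non-constant φ ∈ H^∞_1, the following are equivalent:
(a) φ is a finite Blaschke product;
(b) 1 − |φ(z)|² → 0 as |z| → 1⁻;
(c) (1 − |φ(z)|²)/(1 − |z|²) is bounded above and below by positive constants on 𝔻. -/

open Complex
open scoped ComplexConjugate

noncomputable section

open Metric Filter
open scoped Topology

section Helpers

lemma mem_unitDisk {z : ℂ} : z ∈ unitDisk ↔ ‖z‖ < 1 := by
  simp [unitDisk, mem_ball, dist_eq_norm]

lemma isOpen_unitDisk : IsOpen unitDisk := isOpen_ball

/-- Condition (b) as a standalone predicate. -/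
def CondB (φ : ℂ → ℂ) : Prop :=
  ∀ ε > (0:ℝ), ∃ r : ℝ, r < 1 ∧ ∀ z : ℂ, r < ‖z‖ → ‖z‖ < 1 → 1 - ‖φ z‖^2 < ε

lemma blaschke_id (a z : ℂ) : ‖1 - conj a * z‖^2 - ‖a - z‖^2 = (1-‖a‖^2)*(1-‖z‖^2) := by
  simp only [Complex.sq_norm, Complex.normSq_apply,
    Complex.sub_re, Complex.sub_im, Complex.mul_re, Complex.mul_im, Complex.conj_re,
    Complex.conj_im, Complex.one_re, Complex.one_im]
  ring

lemma denom_ne (a z : ℂ) (ha : ‖a‖ < 1) (hz : ‖z‖ ≤ 1) : 1 - conj a * z ≠ 0 := by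
  intro h
  have h2 : ‖conj a * z‖ < 1 := by
    rw [norm_mul, RCLike.norm_conj]
    nlinarith [norm_nonneg a, norm_nonneg z]
  rw [sub_eq_zero] at h
  rw [← h] at h2
  simp at h2

lemma denom_pos (a z : ℂ) (ha : ‖a‖ < 1) (hz : ‖z‖ ≤ 1) : 0 < ‖1 - conj a * z‖ :=
  norm_pos_iff.2 (denom_ne a z ha hz)

lemma denom_lb (a z : ℂ) : 1 - ‖a‖ * ‖z‖ ≤ ‖1 - conj a * z‖ := by
  have := norm_sub_norm_le (1 : ℂ) (conj a * z)
  simpa [norm_mul, RCLike.norm_conj] using this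

lemma norm_sub_le_denom (a z : ℂ) (ha : ‖a‖ < 1) (hz : ‖z‖ < 1) :
    ‖a - z‖ ≤ ‖1 - conj a * z‖ := by
  rw [← pow_le_pow_iff_left₀ (norm_nonneg _) (norm_nonneg _) (two_ne_zero)]
  have hpos : 0 ≤ (1-‖a‖^2)*(1-‖z‖^2) :=
    mul_nonneg (by nlinarith [norm_nonneg a]) (by nlinarith [norm_nonneg z])
  linarith [blaschke_id a z]

lemma blaschke_le_one (a z : ℂ) (ha : ‖a‖ < 1) (hz : ‖z‖ < 1) :
    ‖(a - z) / (1 - conj a * z)‖ ≤ 1 := by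
  rw [norm_div, div_le_one (denom_pos a z ha hz.le)]
  exact norm_sub_le_denom a z ha hz

/-- one minus squared modulus of a Blaschke factor -/
lemma blaschke_one_sub_sq (a z : ℂ) (ha : ‖a‖ < 1) (hz : ‖z‖ < 1) :
    1 - ‖(a - z) / (1 - conj a * z)‖^2
      = (1-‖a‖^2)*(1-‖z‖^2) / ‖1 - conj a * z‖^2 := by
  have hd := (denom_pos a z ha hz.le).ne'
  rw [norm_div, div_pow, ← blaschke_id a z, eq_div_iff (by positivity), sub_mul,
    div_mul_cancel₀ _ (by positivity)]
  ring

/-- lower bound for a Blaschke factor on a sphere of radius `‖z‖` -/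
lemma blaschke_sphere_lb (a z : ℂ) (hz1 : ‖z‖ < 1) (haz : ‖a‖ < ‖z‖) :
    (‖z‖ - ‖a‖) / (1 - ‖a‖ * ‖z‖) ≤ ‖(a - z) / (1 - conj a * z)‖ := by
  have ha : ‖a‖ < 1 := lt_trans haz hz1
  have hd := denom_pos a z ha hz1.le
  have hdl := denom_lb a z
  have h1 : (0:ℝ) < 1 - ‖a‖ * ‖z‖ := by nlinarith [norm_nonneg a, norm_nonneg z]
  rw [norm_div, div_le_div_iff₀ h1 hd]
  have key : (‖z‖ - ‖a‖)^2 * ‖1 - conj a * z‖^2 ≤ ‖a - z‖^2 * (1 - ‖a‖*‖z‖)^2 := by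
    have h := blaschke_id a z
    have hP : 0 ≤ (1-‖a‖^2)*(1-‖z‖^2) :=
      mul_nonneg (by nlinarith [norm_nonneg a]) (by nlinarith [norm_nonneg z])
    have hE : (1 - ‖a‖*‖z‖)^2 ≤ ‖1 - conj a * z‖^2 := pow_le_pow_left₀ h1.le hdl 2
    nlinarith [mul_nonneg hP (sub_nonneg.2 hE)]
  have h2 : 0 ≤ (‖z‖ - ‖a‖) := by linarith
  have l1 : 0 ≤ (‖z‖ - ‖a‖) * ‖1 - conj a * z‖ := mul_nonneg h2 hd.le
  have l2 : 0 ≤ ‖a - z‖ * (1 - ‖a‖*‖z‖) := mul_nonneg (norm_nonneg _) h1.le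
  rw [← pow_le_pow_iff_left₀ l1 l2 (two_ne_zero)]
  calc ((‖z‖ - ‖a‖) * ‖1 - conj a * z‖)^2 = (‖z‖ - ‖a‖)^2 * ‖1 - conj a * z‖^2 := by ring
  _ ≤ ‖a - z‖^2 * (1 - ‖a‖*‖z‖)^2 := key
  _ = (‖a - z‖ * (1 - ‖a‖*‖z‖))^2 := by ring

/-- Maximum modulus wrapper on sub-balls of the unit disk. -/
lemma maxmod {f : ℂ → ℂ} (hf : DifferentiableOn ℂ f unitDisk) {z : ℂ} {ρ : ℝ}
    (hzρ : ‖z‖ < ρ) (hρ : ρ < 1) {C : ℝ} (hC : ∀ w : ℂ, ‖w‖ = ρ → ‖f w‖ ≤ C) :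
    ‖f z‖ ≤ C := by
  have hρ0 : 0 < ρ := lt_of_le_of_lt (norm_nonneg z) hzρ
  have hsub : closedBall (0:ℂ) ρ ⊆ unitDisk := by
    intro w hw
    rw [mem_unitDisk]
    simp only [mem_closedBall, dist_eq_norm, sub_zero] at hw
    linarith
  refine Complex.norm_le_of_forall_mem_frontier_norm_le (U := ball (0:ℂ) ρ)
    isBounded_ball ?_ ?_ ?_
  · refine DifferentiableOn.diffContOnCl ?_
    rw [closure_ball (0:ℂ) hρ0.ne']
    exact hf.mono hsub
  · intro w hw
    rw [frontier_ball (0:ℂ) hρ0.ne'] at hw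
    simp only [mem_sphere_iff_norm, sub_zero] at hw
    exact hC w hw
  · exact subset_closure (by simpa [mem_ball, dist_eq_norm] using hzρ)

/-- If a function satisfies condition (b), it is nonzero somewhere on the disk. -/
lemma condB_exists_ne_zero {φ : ℂ → ℂ} (hb : CondB φ) : ∃ z ∈ unitDisk, φ z ≠ 0 := by
  obtain ⟨r, hr1, hr⟩ := hb (1/2) (by norm_num)
  set x : ℝ := (max r 0 + 1)/2 with hx
  have hx0 : 0 < x := by
    have := le_max_right r 0
    rw [hx]; linarith
  have hmax1 : max r 0 < 1 := max_lt hr1 one_pos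
  have hx1 : x < 1 := by rw [hx]; linarith
  have hnx : ‖(x:ℂ)‖ = x := by rw [Complex.norm_of_nonneg hx0.le]
  have hrx : r < x := by
    have := le_max_left r 0
    rw [hx]; linarith
  refine ⟨(x:ℂ), mem_unitDisk.2 (by rw [hnx]; exact hx1), ?_⟩
  intro h0
  have := hr (x:ℂ) (by rw [hnx]; exact hrx) (by rw [hnx]; exact hx1)
  rw [h0] at this
  simp at this
  linarith

lemma not_eventually_zero {φ : ℂ → ℂ} (hφd : DifferentiableOn ℂ φ unitDisk) (hb : CondB φ)
    {a : ℂ} (ha : a ∈ unitDisk) : ¬ ∀ᶠ z in 𝓝 a, φ z = 0 := by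
  intro h
  have han : AnalyticOnNhd ℂ φ unitDisk := hφd.analyticOnNhd isOpen_unitDisk
  have heq : Set.EqOn φ 0 unitDisk :=
    han.eqOn_zero_of_preconnected_of_eventuallyEq_zero
      (convex_ball (0:ℂ) 1).isPreconnected ha h
  obtain ⟨z, hz, hzne⟩ := condB_exists_ne_zero hb
  exact hzne (heq hz)

/-- **Peeling a zero**: remove a Blaschke factor to the full order of a zero. -/
lemma peel {φ : ℂ → ℂ} (hφd : DifferentiableOn ℂ φ unitDisk)
    (hφ1 : ∀ z ∈ unitDisk, ‖φ z‖ ≤ 1) (hb : CondB φ)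
    {a : ℂ} (ha : a ∈ unitDisk) (ha0 : φ a = 0) :
    ∃ (m : ℕ) (ψ : ℂ → ℂ), 0 < m ∧ DifferentiableOn ℂ ψ unitDisk ∧ ψ a ≠ 0 ∧
      (∀ z ∈ unitDisk, φ z = ((a - z)/(1 - conj a * z))^m * ψ z) ∧
      (∀ z ∈ unitDisk, ‖ψ z‖ ≤ 1) := by
  have ha1 : ‖a‖ < 1 := mem_unitDisk.1 ha
  have hA : AnalyticAt ℂ φ a := hφd.analyticAt (isOpen_unitDisk.mem_nhds ha)
  have hord : analyticOrderAt φ a ≠ ⊤ := by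
    intro h
    rw [analyticOrderAt_eq_top] at h
    exact not_eventually_zero hφd hb ha h
  set m : ℕ := (analyticOrderAt φ a).toNat with hmdef
  have hm : analyticOrderAt φ a = (m : ℕ∞) := (ENat.coe_toNat hord).symm
  obtain ⟨g, hg_an, hg_ne, hg_eq⟩ := (hA.analyticOrderAt_eq_natCast (n := m)).1 hm
  have hm0 : 0 < m := by
    rcases Nat.eq_zero_or_pos m with h0 | h
    · exfalso
      have := hg_eq.self_of_nhds
      rw [h0, pow_zero, one_smul, ha0] at this
      exact hg_ne this.symm
    · exact h
  set ψ : ℂ → ℂ := fun z =>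
    if z = a then (-(1 - conj a * a))^m * g a else φ z * ((1 - conj a * z)/(a - z))^m with hψdef
  have hψ_ne_a : ∀ z, z ≠ a → ψ z = φ z * ((1 - conj a * z)/(a - z))^m := by
    intro z hza; rw [hψdef]; simp only [if_neg hza]
  have hψ_near : ψ =ᶠ[𝓝 a] fun z => (-(1 - conj a * z))^m * g z := by
    filter_upwards [hg_eq] with z hzeq
    by_cases hza : z = a
    · subst hza; rw [hψdef]; simp
    · have hza' : z - a ≠ 0 := sub_ne_zero.2 hza
      have hza'' : a - z ≠ 0 := sub_ne_zero.2 (Ne.symm hza)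
      have hkey : ((1 - conj a * z)/(a - z)) = (-(1 - conj a * z))/(z - a) := by
        rw [div_eq_div_iff hza'' hza']; ring
      rw [hψ_ne_a z hza, hzeq, smul_eq_mul, hkey, div_pow]
      field_simp [pow_ne_zero m hza']
  have hRHS_an : AnalyticAt ℂ (fun z => (-(1 - conj a * z))^m * g z) a := by
    apply AnalyticAt.mul _ hg_an
    exact ((analyticAt_const.sub (analyticAt_const.mul (analyticAt_id))).neg).pow m
  have hψa_an : AnalyticAt ℂ ψ a := hRHS_an.congr hψ_near.symm
  have hψa_ne : ψ a ≠ 0 := by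
    rw [hψdef]; simp only [if_pos rfl]
    exact mul_ne_zero (pow_ne_zero _ (neg_ne_zero.2 (denom_ne a a ha1 ha1.le))) hg_ne
  have hψd : DifferentiableOn ℂ ψ unitDisk := by
    intro z hz
    by_cases hza : z = a
    · subst hza; exact hψa_an.differentiableAt.differentiableWithinAt
    · have hφz : DifferentiableAt ℂ φ z := hφd.differentiableAt (isOpen_unitDisk.mem_nhds hz)
      have hden : a - z ≠ 0 := sub_ne_zero.2 (fun h => hza h.symm)
      have hF : DifferentiableAt ℂ (fun w => φ w * ((1 - conj a * w)/(a - w))^m) z := by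
        apply hφz.mul
        apply DifferentiableAt.pow
        exact DifferentiableAt.div (by fun_prop) (by fun_prop) hden
      have hev : ψ =ᶠ[𝓝 z] fun w => φ w * ((1 - conj a * w)/(a - w))^m := by
        filter_upwards [eventually_ne_nhds hza] with w hw
        exact hψ_ne_a w hw
      exact ((hev.differentiableAt_iff).2 hF).differentiableWithinAt
  have hfact : ∀ z ∈ unitDisk, φ z = ((a - z)/(1 - conj a * z))^m * ψ z := by
    intro z hz
    by_cases hza : z = a
    · subst hza
      rw [ha0, sub_self, zero_div, zero_pow hm0.ne', zero_mul]
    · have hden : a - z ≠ 0 := sub_ne_zero.2 (fun h => hza h.symm)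
      have hden2 : 1 - conj a * z ≠ 0 := denom_ne a z ha1 (mem_unitDisk.1 hz).le
      have hcb : ((1 - conj a * z)/(a - z)) * ((a - z)/(1 - conj a * z)) = 1 := by
        field_simp
      rw [hψ_ne_a z hza]
      calc φ z = φ z * ((((1 - conj a * z)/(a-z)) * ((a-z)/(1 - conj a * z)))^m) := by
            rw [hcb, one_pow, mul_one]
      _ = ((a - z)/(1 - conj a * z))^m * (φ z * ((1 - conj a * z)/(a - z))^m) := by
            rw [mul_pow]; ring
  refine ⟨m, ψ, hm0, hψd, hψa_ne, hfact, ?_⟩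
  intro z hz
  have hz1 : ‖z‖ < 1 := mem_unitDisk.1 hz
  set t : ℝ := ‖a‖ with htdef
  have ht1 : t < 1 := ha1
  have ht0 : 0 ≤ t := norm_nonneg a
  have htend : Tendsto (fun ρ : ℝ => ((1 - t*ρ)/(ρ - t))^m) (𝓝[<] (1:ℝ)) (𝓝 1) := by
    have hc : ContinuousAt (fun ρ : ℝ => ((1 - t*ρ)/(ρ - t))^m) 1 := by
      apply ContinuousAt.pow
      exact ContinuousAt.div (by fun_prop) (by fun_prop) (by simp [sub_ne_zero]; exact ht1.ne')
    have h1 : ((1 - t*1)/((1:ℝ) - t))^m = 1 := by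
      rw [mul_one, div_self (sub_ne_zero.2 ht1.ne'), one_pow]
    have h2 : Tendsto (fun ρ : ℝ => ((1 - t*ρ)/(ρ - t))^m) (𝓝[<] (1:ℝ))
        (𝓝 (((1 - t*1)/((1:ℝ) - t))^m)) := hc.tendsto.mono_left nhdsWithin_le_nhds
    rwa [h1] at h2
  refine ge_of_tendsto htend ?_
  have hmem : Set.Ioo (max ‖z‖ t) 1 ∈ 𝓝[<] (1:ℝ) :=
    Ioo_mem_nhdsLT_of_mem ⟨max_lt hz1 ht1, le_refl 1⟩
  filter_upwards [hmem] with ρ hρ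
  obtain ⟨hρl, hρr⟩ := hρ
  have hzρ : ‖z‖ < ρ := lt_of_le_of_lt (le_max_left _ _) hρl
  have htρ : t < ρ := lt_of_le_of_lt (le_max_right _ _) hρl
  apply maxmod hψd hzρ hρr
  intro w hw
  have hw1 : ‖w‖ < 1 := by rw [hw]; exact hρr
  have hwa : w ≠ a := by
    intro h; rw [h, ← htdef] at hw; exact htρ.ne hw
  rw [hψ_ne_a w hwa, norm_mul, norm_pow]
  have hφw : ‖φ w‖ ≤ 1 := hφ1 w (mem_unitDisk.2 hw1)
  have hlb := blaschke_sphere_lb a w hw1 (by rw [hw, ← htdef]; exact htρ)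
  rw [hw, ← htdef] at hlb
  have hpos1 : (0:ℝ) < 1 - t*ρ := by nlinarith
  have hpos2 : (0:ℝ) < (ρ - t)/(1 - t*ρ) := div_pos (by linarith) hpos1
  have hinv : ‖(1 - conj a * w)/(a - w)‖ ≤ (1 - t*ρ)/(ρ - t) := by
    have h1 : ‖(1 - conj a * w)/(a - w)‖ = ‖(a - w)/(1 - conj a * w)‖⁻¹ := by
      rw [norm_div, norm_div, inv_div]
    rw [h1]
    calc ‖(a - w)/(1 - conj a * w)‖⁻¹ ≤ ((ρ - t)/(1 - t*ρ))⁻¹ := inv_anti₀ hpos2 hlb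
    _ = (1 - t*ρ)/(ρ - t) := by rw [inv_div]
  calc ‖φ w‖ * ‖(1 - conj a * w)/(a - w)‖^m
      ≤ 1 * ((1 - t*ρ)/(ρ - t))^m := by
        apply mul_le_mul hφw (pow_le_pow_left₀ (norm_nonneg _) hinv m) (by positivity) one_pos.le
    _ = ((1 - t*ρ)/(ρ - t))^m := one_mul _

/-- Base case: a nowhere-vanishing function satisfying (b) is a unimodular constant. -/
lemma basecase {φ : ℂ → ℂ} (hφd : DifferentiableOn ℂ φ unitDisk)
    (hφ1 : ∀ z ∈ unitDisk, ‖φ z‖ ≤ 1) (hb : CondB φ)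
    (hnv : ∀ z ∈ unitDisk, φ z ≠ 0) :
    ∃ ζ : ℂ, ‖ζ‖ = 1 ∧ ∀ z ∈ unitDisk, φ z = ζ := by
  have h0 : (0:ℂ) ∈ unitDisk := by rw [mem_unitDisk]; simp
  have hinv_d : DifferentiableOn ℂ (fun w => (φ w)⁻¹) unitDisk := hφd.inv hnv
  have key : ∀ z ∈ unitDisk, ‖(φ z)⁻¹‖ ≤ 1 := by
    intro z hz
    rw [mem_unitDisk] at hz
    refine le_of_forall_pos_le_add ?_
    intro ε hε
    have h1ε : (0:ℝ) < 1 + ε := by linarith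
    have hinv1 : (1+ε)⁻¹ < 1 := by
      rw [inv_lt_one_iff₀]; right; linarith
    have hε' : (0:ℝ) < 1 - ((1+ε)⁻¹)^2 := by nlinarith [inv_pos.2 h1ε]
    obtain ⟨r, hr1, hr⟩ := hb _ hε'
    set ρ : ℝ := (max r ‖z‖ + 1)/2 with hρdef
    have hmax1 : max r ‖z‖ < 1 := max_lt hr1 hz
    have hρ1 : ρ < 1 := by rw [hρdef]; linarith
    have hzρ : ‖z‖ < ρ := by
      have : ‖z‖ ≤ max r ‖z‖ := le_max_right _ _
      rw [hρdef]; linarith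
    have hrρ : r < ρ := by
      have : r ≤ max r ‖z‖ := le_max_left _ _
      rw [hρdef]; linarith
    have := maxmod hinv_d hzρ hρ1 (C := 1 + ε) ?_
    · exact this
    intro w hw
    have hw1 : ‖w‖ < 1 := by rw [hw]; exact hρ1
    have hb2 := hr w (by rw [hw]; exact hrρ) hw1
    have h2 : ((1+ε)⁻¹)^2 ≤ ‖φ w‖^2 := by linarith
    have h3 : (1+ε)⁻¹ ≤ ‖φ w‖ := by
      rw [← pow_le_pow_iff_left₀ (by positivity) (norm_nonneg _) two_ne_zero]
      exact h2
    rw [norm_inv]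
    calc ‖φ w‖⁻¹ ≤ ((1+ε)⁻¹)⁻¹ := inv_anti₀ (by positivity) h3
    _ = 1 + ε := by rw [inv_inv]
  have hnorm1 : ∀ z ∈ unitDisk, ‖φ z‖ = 1 := by
    intro z hz
    have hpos : 0 < ‖φ z‖ := norm_pos_iff.2 (hnv z hz)
    have h4 := key z hz
    rw [norm_inv] at h4
    have h5 : ‖φ z‖⁻¹ * ‖φ z‖ = 1 := inv_mul_cancel₀ hpos.ne'
    have : 1 ≤ ‖φ z‖ := by nlinarith
    exact le_antisymm (hφ1 z hz) this
  have hmax : IsMaxOn (norm ∘ φ) unitDisk 0 := by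
    refine isMaxOn_iff.mpr fun z hz => ?_
    simp only [Function.comp_apply, hnorm1 z hz, hnorm1 0 h0, le_refl]
  have heq := Complex.eqOn_of_isPreconnected_of_isMaxOn_norm
    (convex_ball (0:ℂ) 1).isPreconnected isOpen_ball hφd h0 hmax
  exact ⟨φ 0, hnorm1 0 h0, fun z hz => heq hz⟩

lemma zeros_finite {φ : ℂ → ℂ} (hφd : DifferentiableOn ℂ φ unitDisk) (hb : CondB φ) :
    {z ∈ unitDisk | φ z = 0}.Finite := by
  by_contra hinf
  rw [← Set.not_infinite, not_not] at hinf
  obtain ⟨r, hr1, hr⟩ := hb (1/2) (by norm_num)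
  set r₀ : ℝ := max r 0 with hr₀
  have hr₀1 : r₀ < 1 := max_lt hr1 one_pos
  have hsub : {z ∈ unitDisk | φ z = 0} ⊆ closedBall 0 r₀ := by
    rintro z ⟨hz, hz0⟩
    rw [mem_closedBall, dist_zero_right]
    by_contra hgt
    push_neg at hgt
    have := hr z (lt_of_le_of_lt (le_max_left r 0) hgt) (mem_unitDisk.1 hz)
    rw [hz0] at this
    simp at this
    linarith
  obtain ⟨w, hwK, hacc⟩ := hinf.exists_accPt_of_subset_isCompact
    (isCompact_closedBall (0:ℂ) r₀) hsub
  have hw1 : w ∈ unitDisk := by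
    rw [mem_unitDisk]
    rw [mem_closedBall, dist_zero_right] at hwK
    linarith
  rw [accPt_iff_frequently] at hacc
  have hfreq : ∃ᶠ y in 𝓝[≠] w, φ y = 0 := by
    rw [frequently_nhdsWithin_iff]
    exact hacc.mono fun y hy => ⟨hy.2.2, hy.1⟩
  have heq := (hφd.analyticOnNhd isOpen_unitDisk).eqOn_zero_of_preconnected_of_frequently_eq_zero
    (convex_ball (0:ℂ) 1).isPreconnected hw1 hfreq
  obtain ⟨z, hz, hzne⟩ := condB_exists_ne_zero hb
  exact hzne (heq hz)

lemma one_sub_prod_le_sum {ι : Type*} (s : Finset ι) (f : ι → ℝ)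
    (h0 : ∀ i ∈ s, 0 ≤ f i) (h1 : ∀ i ∈ s, f i ≤ 1) :
    1 - ∏ i ∈ s, f i ≤ ∑ i ∈ s, (1 - f i) := by
  induction s using Finset.cons_induction with
  | empty => simp
  | cons a s ha ih =>
    rw [Finset.prod_cons, Finset.sum_cons]
    have hP0 : 0 ≤ ∏ i ∈ s, f i :=
      Finset.prod_nonneg fun i hi => h0 i (Finset.mem_cons_of_mem hi)
    have hP1 : ∏ i ∈ s, f i ≤ 1 :=
      Finset.prod_le_one (fun i hi => h0 i (Finset.mem_cons_of_mem hi))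
        (fun i hi => h1 i (Finset.mem_cons_of_mem hi))
    have hih := ih (fun i hi => h0 i (Finset.mem_cons_of_mem hi))
      (fun i hi => h1 i (Finset.mem_cons_of_mem hi))
    have hfa0 := h0 a (Finset.mem_cons_self a s)
    have hfa1 := h1 a (Finset.mem_cons_self a s)
    nlinarith [mul_nonneg hfa0 (sub_nonneg.2 hP1)]

lemma const_blaschke {φ : ℂ → ℂ} (ζ : ℂ) (hζ : ‖ζ‖ = 1)
    (h : ∀ z ∈ unitDisk, φ z = ζ) : IsFiniteBlaschke φ := by
  refine ⟨0, ζ, Fin.elim0, hζ, fun k => k.elim0, fun z hz => ?_⟩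
  simp [h z hz]

/-- Induction on the number of distinct zeros. -/
lemma toBlaschke : ∀ (n : ℕ) (φ : ℂ → ℂ), DifferentiableOn ℂ φ unitDisk →
    (∀ z ∈ unitDisk, ‖φ z‖ ≤ 1) → CondB φ →
    (∃ Z : Finset ℂ, Z.card ≤ n ∧ ∀ z ∈ unitDisk, φ z = 0 → z ∈ Z) →
    IsFiniteBlaschke φ := by
  intro n
  induction n with
  | zero =>
    rintro φ hd h1 hb ⟨Z, hcard, hZ⟩
    have hZe : Z = ∅ := Finset.card_eq_zero.1 (Nat.le_zero.1 hcard)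
    have hnv : ∀ z ∈ unitDisk, φ z ≠ 0 := by
      intro z hz h0
      have := hZ z hz h0
      rw [hZe] at this
      exact absurd this (Finset.notMem_empty z)
    obtain ⟨ζ, hζ, hrep⟩ := basecase hd h1 hb hnv
    exact const_blaschke ζ hζ hrep
  | succ n ih =>
    rintro φ hd h1 hb ⟨Z, hcard, hZ⟩
    by_cases hnv : ∀ z ∈ unitDisk, φ z ≠ 0
    · obtain ⟨ζ, hζ, hrep⟩ := basecase hd h1 hb hnv
      exact const_blaschke ζ hζ hrep
    · push_neg at hnv
      obtain ⟨a, ha, ha0⟩ := hnv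
      have ha1 : ‖a‖ < 1 := mem_unitDisk.1 ha
      obtain ⟨m, ψ, hm0, hψd, hψa, hfact, hψ1⟩ := peel hd h1 hb ha ha0
      have hφψ : ∀ z ∈ unitDisk, ‖φ z‖ ≤ ‖ψ z‖ := by
        intro z hz
        rw [hfact z hz, norm_mul, norm_pow]
        have hb1 := blaschke_le_one a z ha1 (mem_unitDisk.1 hz)
        calc ‖(a - z)/(1 - conj a * z)‖^m * ‖ψ z‖ ≤ 1^m * ‖ψ z‖ := by
              apply mul_le_mul_of_nonneg_right (pow_le_pow_left₀ (norm_nonneg _) hb1 m)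
                (norm_nonneg _)
        _ = ‖ψ z‖ := by rw [one_pow, one_mul]
      have hψb : CondB ψ := by
        intro ε hε
        obtain ⟨r, hr1, hr⟩ := hb ε hε
        refine ⟨r, hr1, fun z hrz hz1 => ?_⟩
        have h2 := hr z hrz hz1
        have h3 := hφψ z (mem_unitDisk.2 hz1)
        nlinarith [norm_nonneg (φ z), norm_nonneg (ψ z)]
      have hamem : a ∈ Z := hZ a ha ha0
      have hψZ : ∃ Z' : Finset ℂ, Z'.card ≤ n ∧ ∀ z ∈ unitDisk, ψ z = 0 → z ∈ Z' := by
        refine ⟨Z.erase a, ?_, ?_⟩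
        · rw [Finset.card_erase_of_mem hamem]
          omega
        · intro z hz h0
          have hza : z ≠ a := fun h => hψa (h ▸ h0)
          have hφ0 : φ z = 0 := by rw [hfact z hz, h0, mul_zero]
          exact Finset.mem_erase.2 ⟨hza, hZ z hz hφ0⟩
      obtain ⟨n', ζ, b, hζ, hbmem, hrep⟩ := ih ψ hψd hψ1 hψb hψZ
      refine ⟨m + n', ζ, Fin.append (fun _ : Fin m => a) b, hζ, ?_, ?_⟩
      · intro k
        refine Fin.addCases (motive := fun k => Fin.append (fun _ : Fin m => a) b k ∈ unitDisk)
          ?_ ?_ k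
        · intro i; rw [Fin.append_left]; exact ha
        · intro i; rw [Fin.append_right]; exact hbmem i
      · intro z hz
        rw [hfact z hz, hrep z hz, Fin.prod_univ_add]
        simp only [Fin.append_left, Fin.append_right]
        rw [Finset.prod_const, Finset.card_univ, Fintype.card_fin]
        ring

lemma b_to_a {φ : ℂ → ℂ} (hφd : DifferentiableOn ℂ φ unitDisk)
    (hφ1 : ∀ z ∈ unitDisk, ‖φ z‖ ≤ 1) (hb : CondB φ) : IsFiniteBlaschke φ := by
  have hfin := zeros_finite hφd hb
  exact toBlaschke hfin.toFinset.card φ hφd hφ1 hb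
    ⟨hfin.toFinset, le_rfl, fun z hz h0 => hfin.mem_toFinset.2 ⟨hz, h0⟩⟩

lemma a_to_c {φ : ℂ → ℂ} (hφnc : ¬ ∃ c : ℂ, ∀ z ∈ unitDisk, φ z = c)
    (hB : IsFiniteBlaschke φ) :
    ∃ c C : ℝ, 0 < c ∧ c ≤ C ∧
      ∀ z ∈ unitDisk, c ≤ (1 - ‖φ z‖ ^ 2) / (1 - ‖z‖ ^ 2) ∧
        (1 - ‖φ z‖ ^ 2) / (1 - ‖z‖ ^ 2) ≤ C := by
  obtain ⟨n, ζ, a, hζ, ha, hrep⟩ := hB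
  have hn : n ≠ 0 := by
    intro h
    subst h
    exact hφnc ⟨ζ, fun z hz => by simpa using hrep z hz⟩
  set k0 : Fin n := ⟨0, Nat.pos_of_ne_zero hn⟩
  have hak : ∀ k, ‖a k‖ < 1 := fun k => mem_unitDisk.1 (ha k)
  set c : ℝ := (1 - ‖a k0‖^2)/4 with hc
  set C : ℝ := max c (∑ k, (1-‖a k‖^2)/(1-‖a k‖)^2) with hC
  have hc0 : 0 < c := by
    have := hak k0
    have := norm_nonneg (a k0)
    rw [hc]; nlinarith
  refine ⟨c, C, hc0, le_max_left _ _, ?_⟩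
  intro z hz
  have hz1 : ‖z‖ < 1 := mem_unitDisk.1 hz
  have h1z : (0:ℝ) < 1 - ‖z‖^2 := by nlinarith [norm_nonneg z]
  set x : Fin n → ℝ := fun k => ‖(a k - z)/(1 - conj (a k) * z)‖^2 with hx
  have hx0 : ∀ k, 0 ≤ x k := fun k => sq_nonneg _
  have hx1 : ∀ k, x k ≤ 1 := by
    intro k
    rw [hx]
    calc ‖(a k - z)/(1 - conj (a k) * z)‖^2 ≤ 1^2 :=
      pow_le_pow_left₀ (norm_nonneg _) (blaschke_le_one (a k) z (hak k) hz1) 2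
    _ = 1 := one_pow 2
  have hφsq : ‖φ z‖^2 = ∏ k, x k := by
    rw [hrep z hz, norm_mul, hζ, one_mul, norm_prod, ← Finset.prod_pow]
  have hDk0 : ‖1 - conj (a k0) * z‖ ≤ 2 := by
    calc ‖1 - conj (a k0) * z‖ ≤ ‖(1:ℂ)‖ + ‖conj (a k0) * z‖ := norm_sub_le _ _
    _ = 1 + ‖a k0‖ * ‖z‖ := by rw [norm_one, norm_mul, RCLike.norm_conj]
    _ ≤ 2 := by nlinarith [norm_nonneg (a k0), norm_nonneg z, hak k0]
  have hstep1 : c * (1 - ‖z‖^2) ≤ 1 - x k0 := by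
    rw [hx]
    rw [blaschke_one_sub_sq (a k0) z (hak k0) hz1]
    rw [hc]
    have hD0 : 0 < ‖1 - conj (a k0) * z‖^2 := pow_pos (denom_pos (a k0) z (hak k0) hz1.le) 2
    have hD4 : ‖1 - conj (a k0) * z‖^2 ≤ 4 := by nlinarith [norm_nonneg (1 - conj (a k0) * z)]
    rw [div_mul_eq_mul_div, div_le_div_iff₀ (by norm_num) hD0]
    have hnum : 0 ≤ (1 - ‖a k0‖^2) * (1 - ‖z‖^2) := by nlinarith [hak k0, norm_nonneg (a k0)]
    nlinarith
  have hprod_le : ∏ k, x k ≤ x k0 := by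
    rw [← Finset.mul_prod_erase Finset.univ x (Finset.mem_univ k0)]
    calc x k0 * ∏ k ∈ Finset.univ.erase k0, x k ≤ x k0 * 1 := by
          apply mul_le_mul_of_nonneg_left _ (hx0 k0)
          exact Finset.prod_le_one (fun i _ => hx0 i) (fun i _ => hx1 i)
    _ = x k0 := mul_one _
  have hlower : c ≤ (1 - ‖φ z‖ ^ 2) / (1 - ‖z‖ ^ 2) := by
    rw [le_div_iff₀ h1z, hφsq]
    calc c * (1 - ‖z‖^2) ≤ 1 - x k0 := hstep1
    _ ≤ 1 - ∏ k, x k := by linarith [hprod_le]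
  have hupper : (1 - ‖φ z‖ ^ 2) / (1 - ‖z‖ ^ 2) ≤ C := by
    rw [div_le_iff₀ h1z, hφsq]
    have hsum : 1 - ∏ k, x k ≤ ∑ k, (1 - x k) :=
      one_sub_prod_le_sum Finset.univ x (fun i _ => hx0 i) (fun i _ => hx1 i)
    have hterm : ∀ k, 1 - x k ≤ (1-‖a k‖^2)/(1-‖a k‖)^2 * (1 - ‖z‖^2) := by
      intro k
      rw [hx, blaschke_one_sub_sq (a k) z (hak k) hz1]
      have h1a : (0:ℝ) < 1 - ‖a k‖ := by linarith [hak k]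
      have hD0 : 0 < ‖1 - conj (a k) * z‖^2 := pow_pos (denom_pos (a k) z (hak k) hz1.le) 2
      have hDlb : (1 - ‖a k‖)^2 ≤ ‖1 - conj (a k) * z‖^2 := by
        have h2 : 1 - ‖a k‖ ≤ 1 - ‖a k‖ * ‖z‖ := by
          nlinarith [norm_nonneg (a k), norm_nonneg z]
        have h3 : 1 - ‖a k‖ * ‖z‖ ≤ ‖1 - conj (a k) * z‖ := by
          have := norm_sub_norm_le (1:ℂ) (conj (a k) * z)
          simp only [norm_one, norm_mul, RCLike.norm_conj] at this
          linarith
        nlinarith [denom_pos (a k) z (hak k) hz1.le]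
      rw [div_mul_eq_mul_div, div_le_div_iff₀ hD0 (pow_pos h1a 2)]
      have hnum : 0 ≤ (1 - ‖a k‖^2) * (1 - ‖z‖^2) :=
        mul_nonneg (by nlinarith [hak k, norm_nonneg (a k)]) h1z.le
      nlinarith
    calc 1 - ∏ k, x k ≤ ∑ k, (1 - x k) := hsum
    _ ≤ ∑ k, (1-‖a k‖^2)/(1-‖a k‖)^2 * (1 - ‖z‖^2) :=
        Finset.sum_le_sum (fun k _ => hterm k)
    _ = (∑ k, (1-‖a k‖^2)/(1-‖a k‖)^2) * (1 - ‖z‖^2) := by rw [← Finset.sum_mul]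
    _ ≤ C * (1 - ‖z‖^2) := by
        apply mul_le_mul_of_nonneg_right (le_max_right _ _) h1z.le
  exact ⟨hlower, hupper⟩

lemma c_to_b {φ : ℂ → ℂ}
    (h : ∃ c C : ℝ, 0 < c ∧ c ≤ C ∧
      ∀ z ∈ unitDisk, c ≤ (1 - ‖φ z‖ ^ 2) / (1 - ‖z‖ ^ 2) ∧
        (1 - ‖φ z‖ ^ 2) / (1 - ‖z‖ ^ 2) ≤ C) :
    ∀ ε > (0 : ℝ), ∃ r : ℝ, r < 1 ∧
      ∀ z : ℂ, r < ‖z‖ → ‖z‖ < 1 → 1 - ‖φ z‖ ^ 2 < ε := by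
  obtain ⟨c, C, hc0, hcC, hbound⟩ := h
  have hC0 : 0 < C := lt_of_lt_of_le hc0 hcC
  intro ε hε
  refine ⟨max 0 (1 - ε/(2*C)), ?_, ?_⟩
  · apply max_lt one_pos
    have : 0 < ε/(2*C) := by positivity
    linarith
  · intro z hrz hz1
    have hz0 : (0:ℝ) ≤ ‖z‖ := norm_nonneg z
    have h1z : (0:ℝ) < 1 - ‖z‖^2 := by nlinarith
    have hub := (hbound z (mem_unitDisk.2 hz1)).2
    rw [div_le_iff₀ h1z] at hub
    have h2 : 1 - ‖z‖ < ε/(2*C) := by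
      have := lt_of_le_of_lt (le_max_right 0 (1 - ε/(2*C))) hrz
      linarith
    have h3 : 1 - ‖z‖^2 ≤ 2 * (1 - ‖z‖) := by nlinarith
    calc 1 - ‖φ z‖^2 ≤ C * (1 - ‖z‖^2) := hub
    _ ≤ C * (2 * (1 - ‖z‖)) := by apply mul_le_mul_of_nonneg_left h3 hC0.le
    _ < C * (2 * (ε/(2*C))) := by
        apply mul_lt_mul_of_pos_left _ hC0
        linarith
    _ = ε := by field_simp

end Helpers

theorem stmt8 (φ : ℂ → ℂ) (hφd : DifferentiableOn ℂ φ unitDisk)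
    (hφ1 : ∀ z ∈ unitDisk, ‖φ z‖ ≤ 1)
    (hφnc : ¬ ∃ c : ℂ, ∀ z ∈ unitDisk, φ z = c) :
    List.TFAE
      [ IsFiniteBlaschke φ,
        ∀ ε > (0 : ℝ), ∃ r : ℝ, r < 1 ∧
          ∀ z : ℂ, r < ‖z‖ → ‖z‖ < 1 → 1 - ‖φ z‖ ^ 2 < ε,
        ∃ c C : ℝ, 0 < c ∧ c ≤ C ∧
          ∀ z ∈ unitDisk, c ≤ (1 - ‖φ z‖ ^ 2) / (1 - ‖z‖ ^ 2) ∧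
            (1 - ‖φ z‖ ^ 2) / (1 - ‖z‖ ^ 2) ≤ C ] := by
  tfae_have 1 → 3 := fun h => a_to_c hφnc h
  tfae_have 3 → 2 := c_to_b
  tfae_have 2 → 1 := fun h => b_to_a hφd hφ1 h
  tfae_finish

end
end
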